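/- arXiv:2602.00991 — 11 statements merged into one kernel-verified Lean document; each statement's English description precedes it below -/
import Mathlib

section
/- Let ρ be an X-type three-qubit state. If ρ₄₄ρ₅₅ < |ρ₁₈|², or ρ₃₃ρ₆₆ < |ρ₂₇|², or ρ₂₂ρ₇₇ < |ρ₃₆|², or ρ₁₁ρ₈₈ < |ρ₄₅|², then the partial transpose of ρ over the first qubit is not positive semidefinite (so ρ is NPT, hence entangled). -/
open scoped ComplexOrder

/-- Index type for three qubits: `(i, j, k)` with `m - 1 = 4i + 2j + k`. -/
abbrev Q3 : Type := Fin 2 × Fin 2 × Fin 2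

/-- Partial transpose over the first qubit:
`(M^{T₁})_{(i,j,k),(i',j',k')} = M_{(i',j,k),(i,j',k')}`. -/
def ptA (M : Matrix Q3 Q3 ℂ) : Matrix Q3 Q3 ℂ :=
  Matrix.of fun p q : Q3 => M (q.1, p.2.1, p.2.2) (p.1, q.2.1, q.2.2)

/-- An X-type three-qubit state: positive semidefinite (hence Hermitian), trace one,
and the only possibly nonzero entries are on the diagonal and the anti-diagonal. -/
def IsXType (ρ : Matrix Q3 Q3 ℂ) : Prop :=
  ρ.PosSemidef ∧ ρ.trace = 1 ∧
    ∀ p q : Q3, q ≠ p → q ≠ (1 - p.1, 1 - p.2.1, 1 - p.2.2) → ρ p q = 0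


lemma psd_diag_re_nonneg {n : Type*} [Fintype n] [DecidableEq n] (M : Matrix n n ℂ)
    (hM : M.PosSemidef) (a : n) : 0 ≤ (M a a).re := by
  have hq := hM.dotProduct_mulVec_nonneg (Pi.single a 1)
  simp [Matrix.mulVec_single, dotProduct, Pi.single_apply] at hq
  exact (Complex.le_def.mp hq).1

lemma psd_minor {n : Type*} [Fintype n] [DecidableEq n] (M : Matrix n n ℂ)
    (hM : M.PosSemidef) (a b : n) :
    (‖M a b‖)^2 ≤ (M a a).re * (M b b).re := by
  have hH := hM.isHermitian
  have hba : M b a = starRingEnd ℂ (M a b) := by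
    conv_lhs => rw [← hH]
    simp [Matrix.conjTranspose_apply]
  have himA : (M a a).im = 0 := by
    have h1 : M a a = starRingEnd ℂ (M a a) := by
      conv_lhs => rw [← hH]
      simp [Matrix.conjTranspose_apply]
    have := congrArg Complex.im h1
    simp [Complex.conj_im] at this
    linarith
  have himB : (M b b).im = 0 := by
    have h1 : M b b = starRingEnd ℂ (M b b) := by
      conv_lhs => rw [← hH]
      simp [Matrix.conjTranspose_apply]
    have := congrArg Complex.im h1
    simp [Complex.conj_im] at this
    linarith
  have hAe : M a a = ((M a a).re : ℂ) := by
    apply Complex.ext <;> simp [himA]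
  have hBe : M b b = ((M b b).re : ℂ) := by
    apply Complex.ext <;> simp [himB]
  have key : ∀ t : ℝ, 0 ≤ (‖M a b‖)^2 * (M a a).re + t^2 * (M b b).re
      - 2 * t * (‖M a b‖)^2 := by
    intro t
    have hq := (hM.submatrix ![a, b]).dotProduct_mulVec_nonneg ![M a b, ((-t : ℝ) : ℂ)]
    simp only [Matrix.mulVec, dotProduct, Fin.sum_univ_two, Matrix.submatrix_apply,
      Matrix.cons_val_zero, Matrix.cons_val_one, Matrix.head_cons, Pi.star_apply,
      RCLike.star_def] at hq
    rw [hba, hAe, hBe] at hq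
    have hval : (starRingEnd ℂ) (M a b) * (((M a a).re : ℂ) * M a b + M a b * ((-t:ℝ):ℂ)) +
        (starRingEnd ℂ) ((-t:ℝ):ℂ) *
          ((starRingEnd ℂ) (M a b) * M a b + ((M b b).re:ℂ) * ((-t:ℝ):ℂ))
        = (((‖M a b‖)^2 * (M a a).re + t^2 * (M b b).re
          - 2 * t * (‖M a b‖)^2 : ℝ) : ℂ) := by
      rw [Complex.conj_ofReal]
      have h1 : (starRingEnd ℂ) (M a b) * M a b = (((‖M a b‖)^2 : ℝ) : ℂ) := by
        rw [mul_comm, Complex.mul_conj]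
        norm_cast
        exact (Complex.sq_norm _).symm
      push_cast [Complex.ofReal_pow] at h1 ⊢
      linear_combination (((M a a).re : ℂ) - 2*t) * h1
    rw [hval] at hq
    exact_mod_cast (Complex.le_def.mp hq).1
  set c := M a b
  set A := (M a a).re
  set B := (M b b).re
  have hA0 : 0 ≤ A := psd_diag_re_nonneg M hM a
  have hB0 : 0 ≤ B := psd_diag_re_nonneg M hM b
  rcases eq_or_lt_of_le hA0 with hA' | hA'
  · have hc0 : (‖c‖)^2 = 0 := by
      by_contra hne
      have hpos : 0 < (‖c‖)^2 :=
        lt_of_le_of_ne (sq_nonneg _) (Ne.symm hne)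
      set K := (‖c‖)^2 with hK
      set t := K / (B + 1) with htdef
      have hB1 : (0:ℝ) < B + 1 := by linarith
      have ht : t * (B + 1) = K := div_mul_cancel₀ _ (ne_of_gt hB1)
      have hε : 0 < t := div_pos hpos hB1
      have := key t
      rw [← hA'] at this
      nlinarith [mul_pos hε hε, mul_pos hε hpos]
    rw [hc0, ← hA']
    positivity
  · have := key A
    nlinarith

/-- if one of the X-state entanglement conditions holds, the partial
transpose over the first qubit is not positive semidefinite. -/
theorem xstate_npt_of_entanglement_condition
    (ρ : Matrix Q3 Q3 ℂ) (hX : IsXType ρ)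
    (r11 r22 r33 r44 r55 r66 r77 r88 c18 c27 c36 c45 : ℝ)
    (hr11 : r11 = (ρ (0,0,0) (0,0,0)).re)
    (hr22 : r22 = (ρ (0,0,1) (0,0,1)).re)
    (hr33 : r33 = (ρ (0,1,0) (0,1,0)).re)
    (hr44 : r44 = (ρ (0,1,1) (0,1,1)).re)
    (hr55 : r55 = (ρ (1,0,0) (1,0,0)).re)
    (hr66 : r66 = (ρ (1,0,1) (1,0,1)).re)
    (hr77 : r77 = (ρ (1,1,0) (1,1,0)).re)
    (hr88 : r88 = (ρ (1,1,1) (1,1,1)).re)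
    (hc18 : c18 = ‖ρ (0,0,0) (1,1,1)‖)
    (hc27 : c27 = ‖ρ (0,0,1) (1,1,0)‖)
    (hc36 : c36 = ‖ρ (0,1,0) (1,0,1)‖)
    (hc45 : c45 = ‖ρ (0,1,1) (1,0,0)‖)
    (h : r44 * r55 < c18 ^ 2 ∨ r33 * r66 < c27 ^ 2 ∨
         r22 * r77 < c36 ^ 2 ∨ r11 * r88 < c45 ^ 2) :
    ¬ (ptA ρ).PosSemidef := by
  intro hPSD
  have hherm := hX.1.1
  have habs : ∀ p q : Q3, ‖ρ q p‖ = ‖ρ p q‖ := by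
    intro p q
    have : ρ q p = starRingEnd ℂ (ρ p q) := by
      conv_lhs => rw [← hherm]
      simp [Matrix.conjTranspose_apply]
    rw [this, Complex.norm_conj]
  rcases h with h | h | h | h
  · have hm := psd_minor _ hPSD ((0,1,1) : Q3) ((1,0,0) : Q3)
    have e1 : ptA ρ ((0,1,1) : Q3) ((1,0,0) : Q3) = ρ (1,1,1) (0,0,0) := rfl
    have e2 : ptA ρ ((0,1,1) : Q3) ((0,1,1) : Q3) = ρ (0,1,1) (0,1,1) := rfl
    have e3 : ptA ρ ((1,0,0) : Q3) ((1,0,0) : Q3) = ρ (1,0,0) (1,0,0) := rfl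
    rw [e1, e2, e3, habs] at hm
    rw [hr44, hr55, hc18] at h
    linarith
  · have hm := psd_minor _ hPSD ((0,1,0) : Q3) ((1,0,1) : Q3)
    have e1 : ptA ρ ((0,1,0) : Q3) ((1,0,1) : Q3) = ρ (1,1,0) (0,0,1) := rfl
    have e2 : ptA ρ ((0,1,0) : Q3) ((0,1,0) : Q3) = ρ (0,1,0) (0,1,0) := rfl
    have e3 : ptA ρ ((1,0,1) : Q3) ((1,0,1) : Q3) = ρ (1,0,1) (1,0,1) := rfl
    rw [e1, e2, e3, habs] at hm
    rw [hr33, hr66, hc27] at h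
    linarith
  · have hm := psd_minor _ hPSD ((0,0,1) : Q3) ((1,1,0) : Q3)
    have e1 : ptA ρ ((0,0,1) : Q3) ((1,1,0) : Q3) = ρ (1,0,1) (0,1,0) := rfl
    have e2 : ptA ρ ((0,0,1) : Q3) ((0,0,1) : Q3) = ρ (0,0,1) (0,0,1) := rfl
    have e3 : ptA ρ ((1,1,0) : Q3) ((1,1,0) : Q3) = ρ (1,1,0) (1,1,0) := rfl
    rw [e1, e2, e3, habs] at hm
    rw [hr22, hr77, hc36] at h
    linarith
  · have hm := psd_minor _ hPSD ((0,0,0) : Q3) ((1,1,1) : Q3)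
    have e1 : ptA ρ ((0,0,0) : Q3) ((1,1,1) : Q3) = ρ (1,0,0) (0,1,1) := rfl
    have e2 : ptA ρ ((0,0,0) : Q3) ((0,0,0) : Q3) = ρ (0,0,0) (0,0,0) := rfl
    have e3 : ptA ρ ((1,1,1) : Q3) ((1,1,1) : Q3) = ρ (1,1,1) (1,1,1) := rfl
    rw [e1, e2, e3, habs] at hm
    rw [hr11, hr88, hc45] at h
    linarith
end

section
/- Let ρ be an X-type three-qubit state and τ¹_{AB|C} = (1/√3)ρ + ((3−√3)/3)·(Tr_C ρ ⊗ I₂/2). Define P¹_{a,±} = ((2±√3)/2)ρ₃₃ρ₆₆ + ((2∓√3)/2)ρ₄₄ρ₅₅ + (1/2)(ρ₃₃ρ₅₅+ρ₄₄ρ₆₆) and P¹_{b,±} = ((2±√3)/2)ρ₁₁ρ₈₈ + ((2∓√3)/2)ρ₂₂ρ₇₇ + (1/2)(ρ₁₁ρ₇₇+ρ₂₂ρ₈₈). If |ρ₁₈|² > P¹_{a,−}, or |ρ₂₇|² > P¹_{a,+}, or |ρ₃₆|² > P¹_{b,−}, or |ρ₄₅|² > P¹_{b,+}, then the partial transpose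 of τ¹_{AB|C} over the first qubit is not positive semidefinite (so τ¹_{AB|C} is entangled). -/
open scoped ComplexOrder
set_option maxHeartbeats 1000000
open Matrix

/-- The steered matrix `τ¹ = (1/√3) M + ((3-√3)/3) (Tr₃ M ⊗ I₂/2)`,
where `Tr₃` traces out the third qubit. -/
noncomputable def tauOne (M : Matrix Q3 Q3 ℂ) : Matrix Q3 Q3 ℂ :=
  (Real.sqrt 3 : ℂ)⁻¹ • M +
    (((3 - Real.sqrt 3) / 3 : ℝ) : ℂ) •
      Matrix.of (fun p q : Q3 =>
        (∑ k : Fin 2, M (p.1, p.2.1, k) (q.1, q.2.1, k)) *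
          (if p.2.2 = q.2.2 then (1/2 : ℂ) else 0))

/-- Auxiliary: diagonal entries of a PSD matrix have nonnegative real part. -/
lemma aux_diag_re_nonneg {n : Type*} [Fintype n] [DecidableEq n]
    (M : Matrix n n ℂ) (hM : M.PosSemidef) (p : n) : 0 ≤ (M p p).re := by
  have h0 := hM.dotProduct_mulVec_nonneg (Pi.single p 1)
  rw [Matrix.mulVec_single] at h0
  have hsv : star (Pi.single p (1 : ℂ)) = (Pi.single p 1 : n → ℂ) := by
    rw [← Pi.single_star]; simp
  rw [hsv, single_dotProduct] at h0
  simpa using (Complex.le_def.mp h0).1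

/-- Auxiliary: a 2×2 principal-minor inequality for PSD complex matrices. -/
lemma aux_quad_entry_ineq {n : Type*} [Fintype n] [DecidableEq n]
    (M : Matrix n n ℂ) (hM : M.PosSemidef) (p q : n) :
    ‖M p q‖ ^ 2 * ‖M p q‖ ^ 2 ≤
      (M p p).re * (M q q).re * ‖M p q‖ ^ 2 := by
  set z := M p q with hz
  have hqp : M q p = (starRingEnd ℂ) z := by
    rw [hz, ← hM.1.apply q p]; rfl
  set N : ℝ := ‖z‖ ^ 2 with hN
  have hNz : ((N : ℝ) : ℂ) = z * (starRingEnd ℂ) z := by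
    rw [Complex.mul_conj, hN, Complex.sq_norm]
  have him : (M p p).im = 0 := by
    have h1 := hM.1.apply p p
    have := congrArg Complex.im h1
    simp [Complex.star_def] at this
    linarith
  have himq : (M q q).im = 0 := by
    have h1 := hM.1.apply q q
    have := congrArg Complex.im h1
    simp [Complex.star_def] at this
    linarith
  have key : ∀ u : ℝ, 0 ≤ (M p p).re * N * (u * u) + (-2 * N) * u + (M q q).re := by
    intro u
    set v : n → ℂ := Pi.single p ((u : ℂ) * z) + Pi.single q (-1) with hv
    have h0 := hM.dotProduct_mulVec_nonneg v
    have hsv : star v = Pi.single p ((u : ℂ) * (starRingEnd ℂ) z) + Pi.single q (-1) := by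
      rw [hv, star_add, ← Pi.single_star, ← Pi.single_star]
      simp [Complex.star_def, _root_.map_mul]
    have hS : star v ⬝ᵥ (M *ᵥ v) =
        ((u : ℂ) * (starRingEnd ℂ) z) * (M p p * ((u : ℂ) * z) + M p q * (-1))
          + (-1) * (M q p * ((u : ℂ) * z) + M q q * (-1)) := by
      rw [hsv, hv, Matrix.mulVec_add, Matrix.mulVec_single, Matrix.mulVec_single,
        add_dotProduct, single_dotProduct, single_dotProduct]
      simp
    rw [hS] at h0
    have h2 := (Complex.le_def.mp h0).1
    have hre : (((u : ℂ) * (starRingEnd ℂ) z) * (M p p * ((u : ℂ) * z) + M p q * (-1))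
          + (-1) * (M q p * ((u : ℂ) * z) + M q q * (-1))).re
        = (M p p).re * N * (u * u) + (-2 * N) * u + (M q q).re := by
      rw [hqp, ← hz]
      have hex : ((u : ℂ) * (starRingEnd ℂ) z) * (M p p * ((u : ℂ) * z) + z * (-1))
          + (-1) * ((starRingEnd ℂ) z * ((u : ℂ) * z) + M q q * (-1))
          = (u : ℂ)^2 * (z * (starRingEnd ℂ) z) * M p p
            - 2 * (u:ℂ) * (z * (starRingEnd ℂ) z) + M q q := by ring
      rw [hex, ← hNz]
      simp [Complex.mul_re, Complex.sub_re, Complex.add_re, him, himq,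
        ← Complex.ofReal_pow]
      ring
    rw [hre] at h2
    exact h2
  have hd := discrim_le_zero key
  rw [discrim] at hd
  nlinarith [hd]

/-- Auxiliary: the final real-number contradiction. -/
lemma aux_final_contra (d1 d2 c P : ℝ) (h1 : 0 ≤ d1) (h2 : 0 ≤ d2)
    (hkey : (c^2/3) * (c^2/3) ≤ d1 * d2 * (c^2/3)) (hPe : 3 * (d1 * d2) = P)
    (hgt : c^2 > P) : False := by
  have hP0 : 0 ≤ P := by nlinarith
  have hc2 : 0 < c ^ 2 := lt_of_le_of_lt hP0 hgt
  nlinarith [mul_lt_mul_of_pos_right hgt hc2]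

/-- entanglement (NPT) criterion for `τ¹_{AB|C}`, witnessing steering from Charlie to Alice and Bob. -/
theorem tauOne_ABC_npt (ρ : Matrix Q3 Q3 ℂ) (hX : IsXType ρ)
    (r11 r22 r33 r44 r55 r66 r77 r88 c18 c27 c36 c45 : ℝ)
    (hr11 : r11 = (ρ (0,0,0) (0,0,0)).re)
    (hr22 : r22 = (ρ (0,0,1) (0,0,1)).re)
    (hr33 : r33 = (ρ (0,1,0) (0,1,0)).re)
    (hr44 : r44 = (ρ (0,1,1) (0,1,1)).re)
    (hr55 : r55 = (ρ (1,0,0) (1,0,0)).re)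
    (hr66 : r66 = (ρ (1,0,1) (1,0,1)).re)
    (hr77 : r77 = (ρ (1,1,0) (1,1,0)).re)
    (hr88 : r88 = (ρ (1,1,1) (1,1,1)).re)
    (hc18 : c18 = ‖ρ (0,0,0) (1,1,1)‖)
    (hc27 : c27 = ‖ρ (0,0,1) (1,1,0)‖)
    (hc36 : c36 = ‖ρ (0,1,0) (1,0,1)‖)
    (hc45 : c45 = ‖ρ (0,1,1) (1,0,0)‖)
    (P1am P1ap P1bm P1bp : ℝ)
    (hP1am : P1am = (2 - Real.sqrt 3) / 2 * (r33 * r66) + (2 + Real.sqrt 3) / 2 * (r44 * r55) + 1/2 * (r33 * r55 + r44 * r66))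
    (hP1ap : P1ap = (2 + Real.sqrt 3) / 2 * (r33 * r66) + (2 - Real.sqrt 3) / 2 * (r44 * r55) + 1/2 * (r33 * r55 + r44 * r66))
    (hP1bm : P1bm = (2 - Real.sqrt 3) / 2 * (r11 * r88) + (2 + Real.sqrt 3) / 2 * (r22 * r77) + 1/2 * (r11 * r77 + r22 * r88))
    (hP1bp : P1bp = (2 + Real.sqrt 3) / 2 * (r11 * r88) + (2 - Real.sqrt 3) / 2 * (r22 * r77) + 1/2 * (r11 * r77 + r22 * r88))
    (h : c18 ^ 2 > P1am ∨
         c27 ^ 2 > P1ap ∨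
         c36 ^ 2 > P1bm ∨
         c45 ^ 2 > P1bp) :
    ¬ (ptA (tauOne ρ)).PosSemidef := by
  intro hpsd
  have hH : ρ.IsHermitian := hX.1.1
  set s := Real.sqrt 3 with hsdef
  have hs0 : 0 < s := Real.sqrt_pos.mpr (by norm_num)
  have hs : s ^ 2 = 3 := Real.sq_sqrt (by norm_num)
  have hsi : s⁻¹ = s / 3 := by
    field_simp
    nlinarith [hs]
  rcases h with hgt | hgt | hgt | hgt
  · -- case c18, block (0,1,1)-(1,0,0)
    have E1 : ptA (tauOne ρ) (0,1,1) (0,1,1) = ((s : ℝ) : ℂ)⁻¹ * ρ (0,1,1) (0,1,1)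
        + (((3 - s) / 3 : ℝ) : ℂ) * ((ρ (0,1,0) (0,1,0) + ρ (0,1,1) (0,1,1)) * (1/2)) := by
      simp [ptA, tauOne, Fin.sum_univ_two, hsdef]
    have E2 : ptA (tauOne ρ) (1,0,0) (1,0,0) = ((s : ℝ) : ℂ)⁻¹ * ρ (1,0,0) (1,0,0)
        + (((3 - s) / 3 : ℝ) : ℂ) * ((ρ (1,0,0) (1,0,0) + ρ (1,0,1) (1,0,1)) * (1/2)) := by
      simp [ptA, tauOne, Fin.sum_univ_two, hsdef]
    have Eoff : ptA (tauOne ρ) (0,1,1) (1,0,0) = ((s : ℝ) : ℂ)⁻¹ * ρ (1,1,1) (0,0,0) := by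
      simp [ptA, tauOne, Fin.sum_univ_two, hsdef]
    have hconj : ‖ρ (1,1,1) (0,0,0)‖ = c18 := by
      rw [hc18, ← hH.apply (0,0,0) (1,1,1), Complex.star_def]
      exact (Complex.norm_conj _).symm
    have habs : ‖ptA (tauOne ρ) (0,1,1) (1,0,0)‖ = s⁻¹ * c18 := by
      rw [Eoff, norm_mul, hconj, norm_inv, Complex.norm_real, Real.norm_eq_abs, abs_of_pos hs0]
    have hd1 : (ptA (tauOne ρ) (0,1,1) (0,1,1)).re
        = s⁻¹ * r44 + (3 - s) / 3 * ((r33 + r44) / 2) := by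
      rw [E1, hr33, hr44]
      rw [← Complex.ofReal_inv, show (1/2 : ℂ) = ((1/2 : ℝ) : ℂ) by norm_num]
      simp only [Complex.add_re, Complex.re_ofReal_mul, Complex.mul_re,
        Complex.ofReal_re, Complex.ofReal_im, mul_zero, sub_zero]
      ring
    have hd2 : (ptA (tauOne ρ) (1,0,0) (1,0,0)).re
        = s⁻¹ * r55 + (3 - s) / 3 * ((r55 + r66) / 2) := by
      rw [E2, hr55, hr66]
      rw [← Complex.ofReal_inv, show (1/2 : ℂ) = ((1/2 : ℝ) : ℂ) by norm_num]
      simp only [Complex.add_re, Complex.re_ofReal_mul, Complex.mul_re,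
        Complex.ofReal_re, Complex.ofReal_im, mul_zero, sub_zero]
      ring
    have key := aux_quad_entry_ineq _ hpsd (0,1,1) (1,0,0)
    have hn1 := aux_diag_re_nonneg _ hpsd ((0,1,1) : Q3)
    have hn2 := aux_diag_re_nonneg _ hpsd ((1,0,0) : Q3)
    rw [habs, hd1, hd2, hsi] at key
    rw [hd1, hsi] at hn1
    rw [hd2, hsi] at hn2
    have hNc : (s / 3 * c18) ^ 2 = c18 ^ 2 / 3 := by
      have : (s / 3 * c18) ^ 2 = s ^ 2 * c18 ^ 2 / 9 := by ring
      rw [this, hs]; ring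
    rw [hNc] at key
    refine aux_final_contra _ _ c18 P1am hn1 hn2 key ?_ hgt
    rw [hP1am]
    linear_combination ((r44 * r55 + r33 * r66 - r33 * r55 - r44 * r66) / 12) * hs
  · -- case c27, block (0,1,0)-(1,0,1)
    have E1 : ptA (tauOne ρ) (0,1,0) (0,1,0) = ((s : ℝ) : ℂ)⁻¹ * ρ (0,1,0) (0,1,0)
        + (((3 - s) / 3 : ℝ) : ℂ) * ((ρ (0,1,0) (0,1,0) + ρ (0,1,1) (0,1,1)) * (1/2)) := by
      simp [ptA, tauOne, Fin.sum_univ_two, hsdef]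
    have E2 : ptA (tauOne ρ) (1,0,1) (1,0,1) = ((s : ℝ) : ℂ)⁻¹ * ρ (1,0,1) (1,0,1)
        + (((3 - s) / 3 : ℝ) : ℂ) * ((ρ (1,0,0) (1,0,0) + ρ (1,0,1) (1,0,1)) * (1/2)) := by
      simp [ptA, tauOne, Fin.sum_univ_two, hsdef]
    have Eoff : ptA (tauOne ρ) (0,1,0) (1,0,1) = ((s : ℝ) : ℂ)⁻¹ * ρ (1,1,0) (0,0,1) := by
      simp [ptA, tauOne, Fin.sum_univ_two, hsdef]
    have hconj : ‖ρ (1,1,0) (0,0,1)‖ = c27 := by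
      rw [hc27, ← hH.apply (0,0,1) (1,1,0), Complex.star_def]
      exact (Complex.norm_conj _).symm
    have habs : ‖ptA (tauOne ρ) (0,1,0) (1,0,1)‖ = s⁻¹ * c27 := by
      rw [Eoff, norm_mul, hconj, norm_inv, Complex.norm_real, Real.norm_eq_abs, abs_of_pos hs0]
    have hd1 : (ptA (tauOne ρ) (0,1,0) (0,1,0)).re
        = s⁻¹ * r33 + (3 - s) / 3 * ((r33 + r44) / 2) := by
      rw [E1, hr33, hr44]
      rw [← Complex.ofReal_inv, show (1/2 : ℂ) = ((1/2 : ℝ) : ℂ) by norm_num]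
      simp only [Complex.add_re, Complex.re_ofReal_mul, Complex.mul_re,
        Complex.ofReal_re, Complex.ofReal_im, mul_zero, sub_zero]
      ring
    have hd2 : (ptA (tauOne ρ) (1,0,1) (1,0,1)).re
        = s⁻¹ * r66 + (3 - s) / 3 * ((r55 + r66) / 2) := by
      rw [E2, hr55, hr66]
      rw [← Complex.ofReal_inv, show (1/2 : ℂ) = ((1/2 : ℝ) : ℂ) by norm_num]
      simp only [Complex.add_re, Complex.re_ofReal_mul, Complex.mul_re,
        Complex.ofReal_re, Complex.ofReal_im, mul_zero, sub_zero]
      ring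
    have key := aux_quad_entry_ineq _ hpsd (0,1,0) (1,0,1)
    have hn1 := aux_diag_re_nonneg _ hpsd ((0,1,0) : Q3)
    have hn2 := aux_diag_re_nonneg _ hpsd ((1,0,1) : Q3)
    rw [habs, hd1, hd2, hsi] at key
    rw [hd1, hsi] at hn1
    rw [hd2, hsi] at hn2
    have hNc : (s / 3 * c27) ^ 2 = c27 ^ 2 / 3 := by
      have : (s / 3 * c27) ^ 2 = s ^ 2 * c27 ^ 2 / 9 := by ring
      rw [this, hs]; ring
    rw [hNc] at key
    refine aux_final_contra _ _ c27 P1ap hn1 hn2 key ?_ hgt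
    rw [hP1ap]
    linear_combination ((r33 * r66 + r44 * r55 - r33 * r55 - r44 * r66) / 12) * hs
  · -- case c36, block (0,0,1)-(1,1,0)
    have E1 : ptA (tauOne ρ) (0,0,1) (0,0,1) = ((s : ℝ) : ℂ)⁻¹ * ρ (0,0,1) (0,0,1)
        + (((3 - s) / 3 : ℝ) : ℂ) * ((ρ (0,0,0) (0,0,0) + ρ (0,0,1) (0,0,1)) * (1/2)) := by
      simp [ptA, tauOne, Fin.sum_univ_two, hsdef]
    have E2 : ptA (tauOne ρ) (1,1,0) (1,1,0) = ((s : ℝ) : ℂ)⁻¹ * ρ (1,1,0) (1,1,0)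
        + (((3 - s) / 3 : ℝ) : ℂ) * ((ρ (1,1,0) (1,1,0) + ρ (1,1,1) (1,1,1)) * (1/2)) := by
      simp [ptA, tauOne, Fin.sum_univ_two, hsdef]
    have Eoff : ptA (tauOne ρ) (0,0,1) (1,1,0) = ((s : ℝ) : ℂ)⁻¹ * ρ (1,0,1) (0,1,0) := by
      simp [ptA, tauOne, Fin.sum_univ_two, hsdef]
    have hconj : ‖ρ (1,0,1) (0,1,0)‖ = c36 := by
      rw [hc36, ← hH.apply (0,1,0) (1,0,1), Complex.star_def]
      exact (Complex.norm_conj _).symm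
    have habs : ‖ptA (tauOne ρ) (0,0,1) (1,1,0)‖ = s⁻¹ * c36 := by
      rw [Eoff, norm_mul, hconj, norm_inv, Complex.norm_real, Real.norm_eq_abs, abs_of_pos hs0]
    have hd1 : (ptA (tauOne ρ) (0,0,1) (0,0,1)).re
        = s⁻¹ * r22 + (3 - s) / 3 * ((r11 + r22) / 2) := by
      rw [E1, hr11, hr22]
      rw [← Complex.ofReal_inv, show (1/2 : ℂ) = ((1/2 : ℝ) : ℂ) by norm_num]
      simp only [Complex.add_re, Complex.re_ofReal_mul, Complex.mul_re,
        Complex.ofReal_re, Complex.ofReal_im, mul_zero, sub_zero]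
      ring
    have hd2 : (ptA (tauOne ρ) (1,1,0) (1,1,0)).re
        = s⁻¹ * r77 + (3 - s) / 3 * ((r77 + r88) / 2) := by
      rw [E2, hr77, hr88]
      rw [← Complex.ofReal_inv, show (1/2 : ℂ) = ((1/2 : ℝ) : ℂ) by norm_num]
      simp only [Complex.add_re, Complex.re_ofReal_mul, Complex.mul_re,
        Complex.ofReal_re, Complex.ofReal_im, mul_zero, sub_zero]
      ring
    have key := aux_quad_entry_ineq _ hpsd (0,0,1) (1,1,0)
    have hn1 := aux_diag_re_nonneg _ hpsd ((0,0,1) : Q3)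
    have hn2 := aux_diag_re_nonneg _ hpsd ((1,1,0) : Q3)
    rw [habs, hd1, hd2, hsi] at key
    rw [hd1, hsi] at hn1
    rw [hd2, hsi] at hn2
    have hNc : (s / 3 * c36) ^ 2 = c36 ^ 2 / 3 := by
      have : (s / 3 * c36) ^ 2 = s ^ 2 * c36 ^ 2 / 9 := by ring
      rw [this, hs]; ring
    rw [hNc] at key
    refine aux_final_contra _ _ c36 P1bm hn1 hn2 key ?_ hgt
    rw [hP1bm]
    linear_combination ((r22 * r77 + r11 * r88 - r11 * r77 - r22 * r88) / 12) * hs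
  · -- case c45, block (0,0,0)-(1,1,1)
    have E1 : ptA (tauOne ρ) (0,0,0) (0,0,0) = ((s : ℝ) : ℂ)⁻¹ * ρ (0,0,0) (0,0,0)
        + (((3 - s) / 3 : ℝ) : ℂ) * ((ρ (0,0,0) (0,0,0) + ρ (0,0,1) (0,0,1)) * (1/2)) := by
      simp [ptA, tauOne, Fin.sum_univ_two, hsdef]
    have E2 : ptA (tauOne ρ) (1,1,1) (1,1,1) = ((s : ℝ) : ℂ)⁻¹ * ρ (1,1,1) (1,1,1)
        + (((3 - s) / 3 : ℝ) : ℂ) * ((ρ (1,1,0) (1,1,0) + ρ (1,1,1) (1,1,1)) * (1/2)) := by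
      simp [ptA, tauOne, Fin.sum_univ_two, hsdef]
    have Eoff : ptA (tauOne ρ) (0,0,0) (1,1,1) = ((s : ℝ) : ℂ)⁻¹ * ρ (1,0,0) (0,1,1) := by
      simp [ptA, tauOne, Fin.sum_univ_two, hsdef]
    have hconj : ‖ρ (1,0,0) (0,1,1)‖ = c45 := by
      rw [hc45, ← hH.apply (0,1,1) (1,0,0), Complex.star_def]
      exact (Complex.norm_conj _).symm
    have habs : ‖ptA (tauOne ρ) (0,0,0) (1,1,1)‖ = s⁻¹ * c45 := by
      rw [Eoff, norm_mul, hconj, norm_inv, Complex.norm_real, Real.norm_eq_abs, abs_of_pos hs0]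
    have hd1 : (ptA (tauOne ρ) (0,0,0) (0,0,0)).re
        = s⁻¹ * r11 + (3 - s) / 3 * ((r11 + r22) / 2) := by
      rw [E1, hr11, hr22]
      rw [← Complex.ofReal_inv, show (1/2 : ℂ) = ((1/2 : ℝ) : ℂ) by norm_num]
      simp only [Complex.add_re, Complex.re_ofReal_mul, Complex.mul_re,
        Complex.ofReal_re, Complex.ofReal_im, mul_zero, sub_zero]
      ring
    have hd2 : (ptA (tauOne ρ) (1,1,1) (1,1,1)).re
        = s⁻¹ * r88 + (3 - s) / 3 * ((r77 + r88) / 2) := by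
      rw [E2, hr77, hr88]
      rw [← Complex.ofReal_inv, show (1/2 : ℂ) = ((1/2 : ℝ) : ℂ) by norm_num]
      simp only [Complex.add_re, Complex.re_ofReal_mul, Complex.mul_re,
        Complex.ofReal_re, Complex.ofReal_im, mul_zero, sub_zero]
      ring
    have key := aux_quad_entry_ineq _ hpsd (0,0,0) (1,1,1)
    have hn1 := aux_diag_re_nonneg _ hpsd ((0,0,0) : Q3)
    have hn2 := aux_diag_re_nonneg _ hpsd ((1,1,1) : Q3)
    rw [habs, hd1, hd2, hsi] at key
    rw [hd1, hsi] at hn1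
    rw [hd2, hsi] at hn2
    have hNc : (s / 3 * c45) ^ 2 = c45 ^ 2 / 3 := by
      have : (s / 3 * c45) ^ 2 = s ^ 2 * c45 ^ 2 / 9 := by ring
      rw [this, hs]; ring
    rw [hNc] at key
    refine aux_final_contra _ _ c45 P1bp hn1 hn2 key ?_ hgt
    rw [hP1bp]
    linear_combination ((r11 * r88 + r22 * r77 - r11 * r77 - r22 * r88) / 12) * hs
end

section
/- Let ρ be an X-type three-qubit state and let σ be its cyclic permutation to ordering BCA, i.e. σ_{(j,k,i),(j',k',i')} = ρ_{(i,j,k),(i',j',k')}. Let τ¹_{BC|A} = (1/√3)σ + ((3−√3)/3)·(Tr₃ σ ⊗ I₂/2), where Tr₃ traces out the third factor of σ. Define T¹_{a,±} = ((2±√3)/2)ρ₂₂ρ₇₇ + ((2∓√3)/2)ρ₃₃ρ₆₆ + (1/2)(ρ₂₂ρ₃₃+ρ₆₆ρ₇₇) and T¹_{b,±} = ((2±√3)/2)ρ₁₁ρ₈₈ + ((2∓√3)/2)ρ₄₄ρ₅₅ + (1/2)(ρ₁₁ρ₄₄+ρ₅₅ρ₈₈). If |ρ₁₈|² > T¹_{a,−},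 or |ρ₂₇|² > T¹_{b,−}, or |ρ₃₆|² > T¹_{b,+}, or |ρ₄₅|² > T¹_{a,+}, then the partial transpose of τ¹_{BC|A} over its first qubit is not positive semidefinite (so τ¹_{BC|A} is entangled). -/
open scoped ComplexOrder

/-- Cyclic reordering of a three-qubit matrix to ordering BCA:
`σ_{(j,k,i),(j',k',i')} = ρ_{(i,j,k),(i',j',k')}`. -/
def sigmaBCA (ρ : Matrix Q3 Q3 ℂ) : Matrix Q3 Q3 ℂ :=
  Matrix.of fun p q : Q3 => ρ (p.2.2, p.1, p.2.1) (q.2.2, q.1, q.2.1)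

/-! ### Auxiliary lemmas -/

lemma quadform_two {n : Type*} [Fintype n] [DecidableEq n] {M : Matrix n n ℂ}
    (hM : M.PosSemidef) (p q : n) (xp xq : ℂ) :
    0 ≤ ((starRingEnd ℂ) xp * (M p p * xp + M p q * xq) +
         (starRingEnd ℂ) xq * (M q p * xp + M q q * xq)).re := by
  have h := hM.dotProduct_mulVec_nonneg (Pi.single p xp + Pi.single q xq)
  rw [Complex.nonneg_iff] at h
  have hv : dotProduct (star (Pi.single p xp + Pi.single q xq))
      (M.mulVec (Pi.single p xp + Pi.single q xq)) =
      (starRingEnd ℂ) xp * (M p p * xp + M p q * xq) +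
         (starRingEnd ℂ) xq * (M q p * xp + M q q * xq) := by
    rw [star_add, ← Pi.single_star, ← Pi.single_star, Matrix.mulVec_add,
      Matrix.mulVec_single, Matrix.mulVec_single]
    simp only [add_dotProduct, single_dotProduct, Pi.add_apply,
      Complex.star_def, Pi.smul_apply, Matrix.col_apply, MulOpposite.smul_eq_mul_unop,
      MulOpposite.unop_op]
    try ring
  rw [hv] at h
  exact h.1

lemma minor_two {n : Type*} [Fintype n] [DecidableEq n] {M : Matrix n n ℂ}
    (hM : M.PosSemidef) (p q : n) :
    ‖M p q‖ ^ 2 ≤ (M p p).re * (M q q).re := by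
  set a := (M p p).re with ha
  set d := (M q q).re with hd
  have hpp : (M p p : ℂ) = (a : ℂ) := by
    have h1 := hM.1.apply p p
    have him : (M p p).im = 0 := by
      have h2 := congrArg Complex.im h1
      simp [Complex.star_def, Complex.conj_im] at h2
      linarith
    exact Complex.ext rfl him
  have hqq : (M q q : ℂ) = (d : ℂ) := by
    have h1 := hM.1.apply q q
    have him : (M q q).im = 0 := by
      have h2 := congrArg Complex.im h1
      simp [Complex.star_def, Complex.conj_im] at h2
      linarith
    exact Complex.ext rfl him
  set b := M p q with hb
  have hqp : M q p = (starRingEnd ℂ) b := (hM.1.apply q p).symm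
  have ha0 : 0 ≤ a := by
    have := quadform_two hM p q 1 0
    simpa [hpp] using this
  have hd0 : 0 ≤ d := by
    have := quadform_two hM p q 0 1
    simpa [hqq] using this
  have babs : ‖b‖ ^ 2 = (b * (starRingEnd ℂ) b).re := by
    rw [Complex.mul_conj, ← Complex.normSq_eq_norm_sq]
    simp
  rcases lt_or_eq_of_le hd0 with hdpos | hdzero
  · have h := quadform_two hM p q (d : ℂ) (-(starRingEnd ℂ) b)
    rw [hpp, hqq, hqp] at h
    have hre : (((starRingEnd ℂ) (d:ℂ)) * ((a:ℂ) * d + b * (-(starRingEnd ℂ) b)) +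
        ((starRingEnd ℂ) (-(starRingEnd ℂ) b)) * ((starRingEnd ℂ) b * d + (d:ℂ) * (-(starRingEnd ℂ) b))).re
        = d * (d * a - ‖b‖ ^2) := by
      rw [babs]
      simp [Complex.mul_re, Complex.add_re, Complex.conj_re, Complex.conj_im,
        Complex.mul_im, Complex.add_im]
      ring
    rw [hre] at h
    nlinarith
  · rcases lt_or_eq_of_le ha0 with hapos | hazero
    · have h := quadform_two hM p q (-b) (a : ℂ)
      rw [hpp, hqq, hqp] at h
      have hre : (((starRingEnd ℂ) (-b)) * ((a:ℂ) * (-b) + b * (a:ℂ)) +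
          ((starRingEnd ℂ) (a:ℂ)) * ((starRingEnd ℂ) b * (-b) + (d:ℂ) * (a:ℂ))).re
          = a * (a * d - ‖b‖ ^2) := by
        rw [babs]
        simp [Complex.mul_re, Complex.add_re, Complex.conj_re, Complex.conj_im,
          Complex.mul_im, Complex.add_im]
        ring
      rw [hre] at h
      nlinarith
    · have h := quadform_two hM p q 1 (-(starRingEnd ℂ) b)
      rw [hpp, hqq, hqp] at h
      have hre : (((starRingEnd ℂ) (1:ℂ)) * ((a:ℂ) * 1 + b * (-(starRingEnd ℂ) b)) +
          ((starRingEnd ℂ) (-(starRingEnd ℂ) b)) * ((starRingEnd ℂ) b * 1 + (d:ℂ) * (-(starRingEnd ℂ) b))).re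
          = a - 2 * ‖b‖ ^2 + d * ‖b‖ ^ 2 := by
        rw [babs]
        simp [Complex.mul_re, Complex.add_re, Complex.conj_re, Complex.conj_im,
          Complex.mul_im, Complex.add_im]
        ring
      rw [hre] at h
      have hb2 : ‖b‖ ^ 2 ≤ 0 := by nlinarith
      have hb2' : 0 ≤ ‖b‖ ^ 2 := sq_nonneg _
      nlinarith

lemma re_entry (E F G : ℂ) :
    ((Real.sqrt 3 : ℂ)⁻¹ * E + (((3 - Real.sqrt 3)/3 : ℝ):ℂ) * ((F + G)*(1/2))).re
      = (Real.sqrt 3)⁻¹ * E.re + (3 - Real.sqrt 3)/3 * ((F.re + G.re)*(1/2)) := by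
  have h12 : (1/2 : ℂ) = ((1/2 : ℝ) : ℂ) := by norm_num
  rw [h12, ← Complex.ofReal_inv, Complex.add_re, Complex.re_ofReal_mul,
    Complex.re_ofReal_mul, mul_comm (F+G), Complex.re_ofReal_mul, Complex.add_re]
  ring

lemma real_case (A B C D cc T : ℝ)
    (hT : T = (2+Real.sqrt 3)/2*(A*C) + (2-Real.sqrt 3)/2*(B*D) + 1/2*(A*D+B*C))
    (hm : ((Real.sqrt 3)⁻¹*cc)^2 ≤
      ((Real.sqrt 3)⁻¹*A + (3-Real.sqrt 3)/3*((A+B)*(1/2))) *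
      ((Real.sqrt 3)⁻¹*C + (3-Real.sqrt 3)/3*((D+C)*(1/2)))) : cc^2 ≤ T := by
  set s := Real.sqrt 3 with hsdef
  have hs : s^2 = 3 := Real.sq_sqrt (by norm_num)
  have hspos : (0:ℝ) < s := Real.sqrt_pos.mpr (by norm_num)
  have hsinv : s⁻¹ = s/3 := by
    field_simp
    linarith [hs]
  rw [hsinv] at hm
  have e1 : (s/3*cc)^2 = cc^2/3 := by linear_combination (cc^2/9)*hs
  have e2 : ((s/3)*A + (3-s)/3*((A+B)*(1/2))) * ((s/3)*C + (3-s)/3*((D+C)*(1/2))) = T/3 := by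
    rw [hT]; linear_combination ((A-B)*(C-D)/36)*hs
  rw [e1, e2] at hm
  linarith

/-- entanglement (NPT) criterion for `τ¹_{BC|A}`, witnessing steering from Alice to Bob and Charlie. -/
theorem tauOne_BCA_npt (ρ : Matrix Q3 Q3 ℂ) (hX : IsXType ρ)
    (r11 r22 r33 r44 r55 r66 r77 r88 c18 c27 c36 c45 : ℝ)
    (hr11 : r11 = (ρ (0,0,0) (0,0,0)).re)
    (hr22 : r22 = (ρ (0,0,1) (0,0,1)).re)
    (hr33 : r33 = (ρ (0,1,0) (0,1,0)).re)
    (hr44 : r44 = (ρ (0,1,1) (0,1,1)).re)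
    (hr55 : r55 = (ρ (1,0,0) (1,0,0)).re)
    (hr66 : r66 = (ρ (1,0,1) (1,0,1)).re)
    (hr77 : r77 = (ρ (1,1,0) (1,1,0)).re)
    (hr88 : r88 = (ρ (1,1,1) (1,1,1)).re)
    (hc18 : c18 = ‖ρ (0,0,0) (1,1,1)‖)
    (hc27 : c27 = ‖ρ (0,0,1) (1,1,0)‖)
    (hc36 : c36 = ‖ρ (0,1,0) (1,0,1)‖)
    (hc45 : c45 = ‖ρ (0,1,1) (1,0,0)‖)
    (T1am T1ap T1bm T1bp : ℝ)
    (hT1am : T1am = (2 - Real.sqrt 3) / 2 * (r22 * r77) + (2 + Real.sqrt 3) / 2 * (r33 * r66) + 1/2 * (r22 * r33 + r66 * r77))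
    (hT1ap : T1ap = (2 + Real.sqrt 3) / 2 * (r22 * r77) + (2 - Real.sqrt 3) / 2 * (r33 * r66) + 1/2 * (r22 * r33 + r66 * r77))
    (hT1bm : T1bm = (2 - Real.sqrt 3) / 2 * (r11 * r88) + (2 + Real.sqrt 3) / 2 * (r44 * r55) + 1/2 * (r11 * r44 + r55 * r88))
    (hT1bp : T1bp = (2 + Real.sqrt 3) / 2 * (r11 * r88) + (2 - Real.sqrt 3) / 2 * (r44 * r55) + 1/2 * (r11 * r44 + r55 * r88))
    (h : c18 ^ 2 > T1am ∨
         c27 ^ 2 > T1bm ∨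
         c36 ^ 2 > T1bp ∨
         c45 ^ 2 > T1ap) :
    ¬ (ptA (tauOne (sigmaBCA ρ))).PosSemidef := by
  intro hPSD
  rcases h with h1 | h1 | h1 | h1
  · -- c18 case: p = (1,0,0), q = (0,1,1)
    have hm := minor_two hPSD ((1,0,0) : Q3) ((0,1,1) : Q3)
    have epq : (ptA (tauOne (sigmaBCA ρ))) (1,0,0) (0,1,1) =
        (Real.sqrt 3:ℂ)⁻¹ * ρ (0,0,0) (1,1,1) := by
      simp [ptA, tauOne, sigmaBCA, Fin.sum_univ_two]
    have epp : (ptA (tauOne (sigmaBCA ρ))) (1,0,0) (1,0,0) =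
        (Real.sqrt 3:ℂ)⁻¹ * ρ (0,1,0) (0,1,0) +
        (((3 - Real.sqrt 3)/3:ℝ):ℂ) * ((ρ (0,1,0) (0,1,0) + ρ (1,1,0) (1,1,0))*(1/2)) := by
      simp [ptA, tauOne, sigmaBCA, Fin.sum_univ_two]
    have eqq : (ptA (tauOne (sigmaBCA ρ))) (0,1,1) (0,1,1) =
        (Real.sqrt 3:ℂ)⁻¹ * ρ (1,0,1) (1,0,1) +
        (((3 - Real.sqrt 3)/3:ℝ):ℂ) * ((ρ (0,0,1) (0,0,1) + ρ (1,0,1) (1,0,1))*(1/2)) := by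
      simp [ptA, tauOne, sigmaBCA, Fin.sum_univ_two]
    rw [epq, epp, eqq, re_entry, re_entry, norm_mul, norm_inv, Complex.norm_real, Real.norm_eq_abs,
      abs_of_nonneg (Real.sqrt_nonneg 3), ← hc18, ← hr33, ← hr77, ← hr22, ← hr66] at hm
    exact absurd (real_case r33 r77 r66 r22 c18 T1am (by rw [hT1am]; ring) hm)
      (not_le.mpr h1)
  · -- c27 case: p = (1,1,0), q = (0,0,1)
    have hm := minor_two hPSD ((1,1,0) : Q3) ((0,0,1) : Q3)
    have epq : (ptA (tauOne (sigmaBCA ρ))) (1,1,0) (0,0,1) =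
        (Real.sqrt 3:ℂ)⁻¹ * ρ (0,0,1) (1,1,0) := by
      simp [ptA, tauOne, sigmaBCA, Fin.sum_univ_two]
    have epp : (ptA (tauOne (sigmaBCA ρ))) (1,1,0) (1,1,0) =
        (Real.sqrt 3:ℂ)⁻¹ * ρ (0,1,1) (0,1,1) +
        (((3 - Real.sqrt 3)/3:ℝ):ℂ) * ((ρ (0,1,1) (0,1,1) + ρ (1,1,1) (1,1,1))*(1/2)) := by
      simp [ptA, tauOne, sigmaBCA, Fin.sum_univ_two]
    have eqq : (ptA (tauOne (sigmaBCA ρ))) (0,0,1) (0,0,1) =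
        (Real.sqrt 3:ℂ)⁻¹ * ρ (1,0,0) (1,0,0) +
        (((3 - Real.sqrt 3)/3:ℝ):ℂ) * ((ρ (0,0,0) (0,0,0) + ρ (1,0,0) (1,0,0))*(1/2)) := by
      simp [ptA, tauOne, sigmaBCA, Fin.sum_univ_two]
    rw [epq, epp, eqq, re_entry, re_entry, norm_mul, norm_inv, Complex.norm_real, Real.norm_eq_abs,
      abs_of_nonneg (Real.sqrt_nonneg 3), ← hc27, ← hr44, ← hr88, ← hr11, ← hr55] at hm
    exact absurd (real_case r44 r88 r55 r11 c27 T1bm (by rw [hT1bm]; ring) hm)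
      (not_le.mpr h1)
  · -- c36 case: p = (0,0,0), q = (1,1,1)
    have hm := minor_two hPSD ((0,0,0) : Q3) ((1,1,1) : Q3)
    have epq : (ptA (tauOne (sigmaBCA ρ))) (0,0,0) (1,1,1) =
        (Real.sqrt 3:ℂ)⁻¹ * ρ (0,1,0) (1,0,1) := by
      simp [ptA, tauOne, sigmaBCA, Fin.sum_univ_two]
    have epp : (ptA (tauOne (sigmaBCA ρ))) (0,0,0) (0,0,0) =
        (Real.sqrt 3:ℂ)⁻¹ * ρ (0,0,0) (0,0,0) +
        (((3 - Real.sqrt 3)/3:ℝ):ℂ) * ((ρ (0,0,0) (0,0,0) + ρ (1,0,0) (1,0,0))*(1/2)) := by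
      simp [ptA, tauOne, sigmaBCA, Fin.sum_univ_two]
    have eqq : (ptA (tauOne (sigmaBCA ρ))) (1,1,1) (1,1,1) =
        (Real.sqrt 3:ℂ)⁻¹ * ρ (1,1,1) (1,1,1) +
        (((3 - Real.sqrt 3)/3:ℝ):ℂ) * ((ρ (0,1,1) (0,1,1) + ρ (1,1,1) (1,1,1))*(1/2)) := by
      simp [ptA, tauOne, sigmaBCA, Fin.sum_univ_two]
    rw [epq, epp, eqq, re_entry, re_entry, norm_mul, norm_inv, Complex.norm_real, Real.norm_eq_abs,
      abs_of_nonneg (Real.sqrt_nonneg 3), ← hc36, ← hr11, ← hr55, ← hr44, ← hr88] at hm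
    exact absurd (real_case r11 r55 r88 r44 c36 T1bp (by rw [hT1bp]; ring) hm)
      (not_le.mpr h1)
  · -- c45 case: p = (0,1,0), q = (1,0,1)
    have hm := minor_two hPSD ((0,1,0) : Q3) ((1,0,1) : Q3)
    have epq : (ptA (tauOne (sigmaBCA ρ))) (0,1,0) (1,0,1) =
        (Real.sqrt 3:ℂ)⁻¹ * ρ (0,1,1) (1,0,0) := by
      simp [ptA, tauOne, sigmaBCA, Fin.sum_univ_two]
    have epp : (ptA (tauOne (sigmaBCA ρ))) (0,1,0) (0,1,0) =
        (Real.sqrt 3:ℂ)⁻¹ * ρ (0,0,1) (0,0,1) +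
        (((3 - Real.sqrt 3)/3:ℝ):ℂ) * ((ρ (0,0,1) (0,0,1) + ρ (1,0,1) (1,0,1))*(1/2)) := by
      simp [ptA, tauOne, sigmaBCA, Fin.sum_univ_two]
    have eqq : (ptA (tauOne (sigmaBCA ρ))) (1,0,1) (1,0,1) =
        (Real.sqrt 3:ℂ)⁻¹ * ρ (1,1,0) (1,1,0) +
        (((3 - Real.sqrt 3)/3:ℝ):ℂ) * ((ρ (0,1,0) (0,1,0) + ρ (1,1,0) (1,1,0))*(1/2)) := by
      simp [ptA, tauOne, sigmaBCA, Fin.sum_univ_two]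
    rw [epq, epp, eqq, re_entry, re_entry, norm_mul, norm_inv, Complex.norm_real, Real.norm_eq_abs,
      abs_of_nonneg (Real.sqrt_nonneg 3), ← hc45, ← hr22, ← hr66, ← hr33, ← hr77] at hm
    exact absurd (real_case r22 r66 r77 r33 c45 T1ap (by rw [hT1ap]; ring) hm)
      (not_le.mpr h1)
end

section
/- For the state ρ^H_{ABC}, the steering quantifiers satisfy S^{C→AB}(ρ^H_{ABC}) = 4·α²(1−α²)u² and S^{B→CA}(ρ^H_{ABC}) = 4·α²(1−α²)u²; that is, in both maxima the term coming from the (1,8) coherence equals 4|a₁₈|² (its subtracted quantity P¹_{a,−}, respectively Q¹_{a,+}, vanishes for ρ^H_{ABC}) and dominates all other terms. -/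
open Filter Topology

set_option maxHeartbeats 1000000 in
/-- for the state `ρ^H_{ABC}`, both `S^{C→AB}` and `S^{B→CA}` equal
`4α²(1-α²)u²`; the subtracted quantities `P¹_{a,-}` and `Q¹_{a,+}` vanish and the
`(1,8)`-coherence term dominates all other terms of the maxima. -/
theorem steering_CtoAB_and_BtoCA_of_rhoHABC
    (α ω T u v : ℝ) (hα0 : 0 < α) (hα1 : α < 1) (hω : 0 < ω) (hT : 0 < T)
    (hu : u = 1 / (Real.exp (-ω / T) + 1)) (hv : v = 1 / (Real.exp (ω / T) + 1))
    (a11 a22 a33 a44 a55 a66 a77 a88 a18 : ℝ)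
    (h11 : a11 = α ^ 2 * u ^ 2) (h22 : a22 = α ^ 2 * u * v) (h33 : a33 = α ^ 2 * u * v)
    (h44 : a44 = α ^ 2 * v ^ 2) (h55 : a55 = 0) (h66 : a66 = 0) (h77 : a77 = 0)
    (h88 : a88 = 1 - α ^ 2) (h18 : a18 = α * u * Real.sqrt (1 - α ^ 2))
    (P1am P1ap P1bm P1bp Q1ap Q1am Q1bp Q1bm : ℝ)
    (hP1am : P1am = (2 - Real.sqrt 3) / 2 * (a33 * a66) + (2 + Real.sqrt 3) / 2 * (a44 * a55) +
      1/2 * (a33 * a55 + a44 * a66))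
    (hP1ap : P1ap = (2 + Real.sqrt 3) / 2 * (a33 * a66) + (2 - Real.sqrt 3) / 2 * (a44 * a55) +
      1/2 * (a33 * a55 + a44 * a66))
    (hP1bm : P1bm = (2 - Real.sqrt 3) / 2 * (a11 * a88) + (2 + Real.sqrt 3) / 2 * (a22 * a77) +
      1/2 * (a11 * a77 + a22 * a88))
    (hP1bp : P1bp = (2 + Real.sqrt 3) / 2 * (a11 * a88) + (2 - Real.sqrt 3) / 2 * (a22 * a77) +
      1/2 * (a11 * a77 + a22 * a88))
    (hQ1ap : Q1ap = (2 + Real.sqrt 3) / 2 * (a22 * a77) + (2 - Real.sqrt 3) / 2 * (a44 * a55) +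
      1/2 * (a22 * a55 + a44 * a77))
    (hQ1am : Q1am = (2 - Real.sqrt 3) / 2 * (a22 * a77) + (2 + Real.sqrt 3) / 2 * (a44 * a55) +
      1/2 * (a22 * a55 + a44 * a77))
    (hQ1bp : Q1bp = (2 + Real.sqrt 3) / 2 * (a11 * a88) + (2 - Real.sqrt 3) / 2 * (a33 * a66) +
      1/2 * (a11 * a66 + a33 * a88))
    (hQ1bm : Q1bm = (2 - Real.sqrt 3) / 2 * (a11 * a88) + (2 + Real.sqrt 3) / 2 * (a33 * a66) +
      1/2 * (a11 * a66 + a33 * a88)) :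
    P1am = 0 ∧
    max 0 (max (4 * (a18 ^ 2 - P1am)) (max (4 * (0 - P1ap)) (max (4 * (0 - P1bm)) (4 * (0 - P1bp)))))
      = 4 * α ^ 2 * (1 - α ^ 2) * u ^ 2 ∧
    Q1ap = 0 ∧
    max 0 (max (4 * (a18 ^ 2 - Q1ap)) (max (4 * (0 - Q1bp)) (max (4 * (0 - Q1am)) (4 * (0 - Q1bm)))))
      = 4 * α ^ 2 * (1 - α ^ 2) * u ^ 2 := by

  have hs3 : (0:ℝ) ≤ Real.sqrt 3 := Real.sqrt_nonneg 3
  have hs3' : Real.sqrt 3 ≤ 2 := by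
    rw [show (2:ℝ) = Real.sqrt 4 by rw [show (4:ℝ) = 2^2 by norm_num, Real.sqrt_sq]; norm_num]
    exact Real.sqrt_le_sqrt (by norm_num)
  have hu0 : 0 < u := by
    rw [hu]; positivity
  have hv0 : 0 < v := by
    rw [hv]; positivity
  have hα2 : (0:ℝ) ≤ 1 - α ^ 2 := by nlinarith
  have h18sq : a18 ^ 2 = α ^ 2 * u ^ 2 * (1 - α ^ 2) := by
    rw [h18, mul_pow, mul_pow, Real.sq_sqrt hα2]
  have hPam : P1am = 0 := by rw [hP1am, h55, h66]; ring
  have hQap : Q1ap = 0 := by rw [hQ1ap, h55, h77]; ring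
  have hA : 4 * (a18 ^ 2 - P1am) = 4 * α ^ 2 * (1 - α ^ 2) * u ^ 2 := by
    rw [hPam, h18sq]; ring
  have hA' : 4 * (a18 ^ 2 - Q1ap) = 4 * α ^ 2 * (1 - α ^ 2) * u ^ 2 := by
    rw [hQap, h18sq]; ring
  have hApos : (0:ℝ) ≤ 4 * α ^ 2 * (1 - α ^ 2) * u ^ 2 := by positivity
  have hPap : 0 ≤ P1ap := by
    have : P1ap = 0 := by rw [hP1ap, h55, h66]; ring
    linarith
  have hPbm : 0 ≤ P1bm := by
    have heq : P1bm = (2 - Real.sqrt 3) / 2 * (α ^ 2 * u ^ 2 * (1 - α ^ 2)) + 1/2 * (α ^ 2 * u * v * (1 - α ^ 2)) := by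
      rw [hP1bm, h77, h11, h22, h88]; ring
    rw [heq]
    have h1 : 0 ≤ (2 - Real.sqrt 3) / 2 * (α ^ 2 * u ^ 2 * (1 - α ^ 2)) := by
      apply mul_nonneg; linarith; positivity
    have h2 : 0 ≤ 1/2 * (α ^ 2 * u * v * (1 - α ^ 2)) := by positivity
    linarith
  have hPbp : 0 ≤ P1bp := by
    have heq : P1bp = (2 + Real.sqrt 3) / 2 * (α ^ 2 * u ^ 2 * (1 - α ^ 2)) + 1/2 * (α ^ 2 * u * v * (1 - α ^ 2)) := by
      rw [hP1bp, h77, h11, h22, h88]; ring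
    rw [heq]
    have h1 : 0 ≤ (2 + Real.sqrt 3) / 2 * (α ^ 2 * u ^ 2 * (1 - α ^ 2)) := by
      positivity
    have h2 : 0 ≤ 1/2 * (α ^ 2 * u * v * (1 - α ^ 2)) := by positivity
    linarith
  have hQam : 0 ≤ Q1am := by
    have : Q1am = 0 := by rw [hQ1am, h55, h77]; ring
    linarith
  have hQbp : 0 ≤ Q1bp := by
    have heq : Q1bp = (2 + Real.sqrt 3) / 2 * (α ^ 2 * u ^ 2 * (1 - α ^ 2)) + 1/2 * (α ^ 2 * u * v * (1 - α ^ 2)) := by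
      rw [hQ1bp, h66, h11, h33, h88]; ring
    rw [heq]
    have h1 : 0 ≤ (2 + Real.sqrt 3) / 2 * (α ^ 2 * u ^ 2 * (1 - α ^ 2)) := by
      positivity
    have h2 : 0 ≤ 1/2 * (α ^ 2 * u * v * (1 - α ^ 2)) := by positivity
    linarith
  have hQbm : 0 ≤ Q1bm := by
    have heq : Q1bm = (2 - Real.sqrt 3) / 2 * (α ^ 2 * u ^ 2 * (1 - α ^ 2)) + 1/2 * (α ^ 2 * u * v * (1 - α ^ 2)) := by
      rw [hQ1bm, h66, h11, h33, h88]; ring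
    rw [heq]
    have h1 : 0 ≤ (2 - Real.sqrt 3) / 2 * (α ^ 2 * u ^ 2 * (1 - α ^ 2)) := by
      apply mul_nonneg; linarith; positivity
    have h2 : 0 ≤ 1/2 * (α ^ 2 * u * v * (1 - α ^ 2)) := by positivity
    linarith
  refine ⟨hPam, ?_, hQap, ?_⟩
  · rw [hA]
    have hle : max (4 * (0 - P1ap)) (max (4 * (0 - P1bm)) (4 * (0 - P1bp)))
        ≤ 4 * α ^ 2 * (1 - α ^ 2) * u ^ 2 :=
      max_le (by linarith) (max_le (by linarith) (by linarith))
    rw [max_eq_left hle, max_eq_right hApos]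
  · rw [hA']
    have hle : max (4 * (0 - Q1bp)) (max (4 * (0 - Q1am)) (4 * (0 - Q1bm)))
        ≤ 4 * α ^ 2 * (1 - α ^ 2) * u ^ 2 :=
      max_le (by linarith) (max_le (by linarith) (by linarith))
    rw [max_eq_left hle, max_eq_right hApos]
end

section
/- For fixed α ∈ (0,1) and ω > 0, the function S^{C→AB}_H(T) = 4α²(1−α²)·u(T)² is strictly decreasing in T on (0,∞); moreover lim_{T→0⁺} S^{C→AB}_H(T) = 4α²(1−α²) and lim_{T→∞} S^{C→AB}_H(T) = α²(1−α²) > 0. In particular, the Hawking effect degrades but never completely destroys the steering from Charlie to Alice and Bob. -/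
open Filter Topology

/-- `S^{C→AB}_H(T) = 4α²(1-α²)u(T)²` is strictly decreasing in the Hawking
temperature, tends to `4α²(1-α²)` as `T → 0⁺` and to `α²(1-α²) > 0` as `T → ∞`. -/
theorem steering_CtoAB_decreasing
    (α ω : ℝ) (hα0 : 0 < α) (hα1 : α < 1) (hω : 0 < ω)
    (S : ℝ → ℝ)
    (hS : ∀ T : ℝ, S T = 4 * α ^ 2 * (1 - α ^ 2) * (1 / (Real.exp (-ω / T) + 1)) ^ 2) :
    StrictAntiOn S (Set.Ioi 0) ∧
    Tendsto S (nhdsWithin 0 (Set.Ioi 0)) (nhds (4 * α ^ 2 * (1 - α ^ 2))) ∧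
    Tendsto S atTop (nhds (α ^ 2 * (1 - α ^ 2))) ∧
    0 < α ^ 2 * (1 - α ^ 2) := by
  have ha2 : 0 < 1 - α ^ 2 := by nlinarith
  have ha3 : 0 < α ^ 2 := by positivity
  have hc : 0 < 4 * α ^ 2 * (1 - α ^ 2) := by positivity
  have hpos : 0 < α ^ 2 * (1 - α ^ 2) := mul_pos ha3 ha2
  refine ⟨?_, ?_, ?_, hpos⟩
  · intro x hx y hy hxy
    simp only [Set.mem_Ioi] at hx hy
    rw [hS x, hS y]
    have h1 : -ω / x < -ω / y := by
      rw [div_lt_div_iff₀ hx hy]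
      nlinarith
    have h2 : Real.exp (-ω / x) < Real.exp (-ω / y) := Real.exp_lt_exp.mpr h1
    have hex : 0 < Real.exp (-ω / x) + 1 := by positivity
    have hey : 0 < Real.exp (-ω / y) + 1 := by positivity
    have h3 : 1 / (Real.exp (-ω / y) + 1) < 1 / (Real.exp (-ω / x) + 1) := by
      apply one_div_lt_one_div_of_lt hex
      linarith
    have h4 : 0 ≤ 1 / (Real.exp (-ω / y) + 1) := by positivity
    have h5 := pow_lt_pow_left₀ h3 h4 (by norm_num : 2 ≠ 0)
    exact mul_lt_mul_of_pos_left h5 hc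
  · have h1 : Tendsto (fun T : ℝ => -ω / T) (nhdsWithin 0 (Set.Ioi 0)) atBot := by
      have : Tendsto (fun T : ℝ => T⁻¹) (nhdsWithin 0 (Set.Ioi 0)) atTop :=
        tendsto_inv_nhdsGT_zero
      have h := Tendsto.const_mul_atTop_of_neg (neg_neg_of_pos hω) this
      simpa [div_eq_mul_inv] using h
    have h2 : Tendsto (fun T : ℝ => Real.exp (-ω / T)) (nhdsWithin 0 (Set.Ioi 0)) (nhds 0) :=
      Real.tendsto_exp_atBot.comp h1
    have h3 : Tendsto (fun T : ℝ => 4 * α ^ 2 * (1 - α ^ 2) * (1 / (Real.exp (-ω / T) + 1)) ^ 2)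
        (nhdsWithin 0 (Set.Ioi 0)) (nhds (4 * α ^ 2 * (1 - α ^ 2) * (1 / (0 + 1)) ^ 2)) := by
      apply Tendsto.const_mul
      apply Tendsto.pow
      exact (tendsto_const_nhds.div (h2.add tendsto_const_nhds) (by norm_num))
    have heq : 4 * α ^ 2 * (1 - α ^ 2) * (1 / ((0:ℝ) + 1)) ^ 2 = 4 * α ^ 2 * (1 - α ^ 2) := by
      norm_num
    rw [heq] at h3
    exact h3.congr (fun T => (hS T).symm)
  · have h1 : Tendsto (fun T : ℝ => -ω / T) atTop (nhds 0) := by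
      simpa using Tendsto.div_atTop
        (tendsto_const_nhds : Tendsto (fun _ : ℝ => -ω) atTop (nhds (-ω))) tendsto_id
    have h2 : Tendsto (fun T : ℝ => Real.exp (-ω / T)) atTop (nhds 1) := by
      have := (Real.continuous_exp.tendsto 0).comp h1
      simpa [Function.comp_def] using this
    have h3 : Tendsto (fun T : ℝ => 4 * α ^ 2 * (1 - α ^ 2) * (1 / (Real.exp (-ω / T) + 1)) ^ 2)
        atTop (nhds (4 * α ^ 2 * (1 - α ^ 2) * (1 / (1 + 1)) ^ 2)) := by
      apply Tendsto.const_mul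
      apply Tendsto.pow
      exact (tendsto_const_nhds.div (h2.add tendsto_const_nhds) (by norm_num))
    have heq : 4 * α ^ 2 * (1 - α ^ 2) * (1 / ((1:ℝ) + 1)) ^ 2 = α ^ 2 * (1 - α ^ 2) := by
      ring
    rw [heq] at h3
    exact h3.congr (fun T => (hS T).symm)
end

section
/- For fixed α ∈ (0,1) and ω > 0, the function f(T) = 4·(α²(1−α²)·u(T)² − (1/2)·α⁴·(u(T)v(T))²), which is the argument of S^{A→BC}_H(T) = max{0, f(T)}, is strictly decreasing in T on (0,∞), and lim_{T→∞} f(T) = α²(1−α²) − α⁴/8. -/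
open Filter Topology

/-- the argument `f(T) = 4(α²(1-α²)u² - (1/2)α⁴(uv)²)` of
`S^{A→BC}_H = max {0, f}` is strictly decreasing in `T` and tends to
`α²(1-α²) - α⁴/8` as `T → ∞`. -/
theorem steering_AtoBC_argument_decreasing
    (α ω : ℝ) (hα0 : 0 < α) (hα1 : α < 1) (hω : 0 < ω)
    (u v f : ℝ → ℝ)
    (hu : ∀ T : ℝ, u T = 1 / (Real.exp (-ω / T) + 1))
    (hv : ∀ T : ℝ, v T = 1 / (Real.exp (ω / T) + 1))
    (hf : ∀ T : ℝ, f T = 4 * (α ^ 2 * (1 - α ^ 2) * (u T) ^ 2 - 1/2 * α ^ 4 * (u T * v T) ^ 2)) :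
    StrictAntiOn f (Set.Ioi 0) ∧
    Tendsto f atTop (nhds (α ^ 2 * (1 - α ^ 2) - α ^ 4 / 8)) := by
  have hA : 0 < α ^ 2 * (1 - α ^ 2) :=
    mul_pos (pow_pos hα0 2) (by nlinarith)
  have hB : 0 < 1/2 * α ^ 4 := by positivity
  constructor
  · intro T₁ hT₁ T₂ hT₂ h12
    simp only [Set.mem_Ioi] at hT₁ hT₂
    rw [hf, hf, hu, hu, hv, hv]
    set p := Real.exp (-ω / T₁) with hpdef
    set q := Real.exp (ω / T₁) with hqdef
    set r := Real.exp (-ω / T₂) with hrdef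
    set s := Real.exp (ω / T₂) with hsdef
    have hp : 0 < p := Real.exp_pos _
    have hq : 0 < q := Real.exp_pos _
    have hr : 0 < r := Real.exp_pos _
    have hs : 0 < s := Real.exp_pos _
    have hpq : p * q = 1 := by
      rw [hpdef, hqdef, ← Real.exp_add]
      rw [show -ω / T₁ + ω / T₁ = 0 by ring, Real.exp_zero]
    have hrs : r * s = 1 := by
      rw [hrdef, hsdef, ← Real.exp_add]
      rw [show -ω / T₂ + ω / T₂ = 0 by ring, Real.exp_zero]
    have hx : ω / T₂ < ω / T₁ := div_lt_div_of_pos_left hω hT₁ h12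
    have hpr : p < r := by
      apply Real.exp_lt_exp.mpr
      rw [neg_div, neg_div]; linarith
    have hsq : s < q := Real.exp_lt_exp.mpr hx
    have hs1 : 1 < s := by
      rw [hsdef, show (1:ℝ) = Real.exp 0 from Real.exp_zero.symm]
      exact Real.exp_lt_exp.mpr (div_pos hω hT₂)
    have hsum : r + s < p + q := by
      nlinarith [mul_pos (sub_pos.mpr hsq) (sub_pos.mpr (show (1:ℝ) < q * s by nlinarith)),
        mul_pos hq hs]
    -- u comparison
    have hU : 1 / (r + 1) < 1 / (p + 1) := by
      apply one_div_lt_one_div_of_lt <;> linarith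
    have hU2 : 0 < 1 / (r + 1) := by positivity
    have hU1 : 0 < 1 / (p + 1) := by positivity
    -- uv comparison
    have hden : (r + 1) * (s + 1) < (p + 1) * (q + 1) := by nlinarith
    have hW : 1 / (p + 1) * (1 / (q + 1)) < 1 / (r + 1) * (1 / (s + 1)) := by
      rw [div_mul_div_comm, div_mul_div_comm, one_mul]
      apply one_div_lt_one_div_of_lt
      · positivity
      · exact hden
    have hW1 : 0 < 1 / (p + 1) * (1 / (q + 1)) := by positivity
    have hsq1 : (1 / (r + 1)) ^ 2 < (1 / (p + 1)) ^ 2 :=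
      pow_lt_pow_left₀ hU hU2.le two_ne_zero
    have hsq2 : (1 / (p + 1) * (1 / (q + 1))) ^ 2 < (1 / (r + 1) * (1 / (s + 1))) ^ 2 :=
      pow_lt_pow_left₀ hW hW1.le two_ne_zero
    have h1 : α ^ 2 * (1 - α ^ 2) * (1 / (r + 1)) ^ 2 < α ^ 2 * (1 - α ^ 2) * (1 / (p + 1)) ^ 2 :=
      mul_lt_mul_of_pos_left hsq1 hA
    have h2 : 1/2 * α ^ 4 * (1 / (p + 1) * (1 / (q + 1))) ^ 2 <
        1/2 * α ^ 4 * (1 / (r + 1) * (1 / (s + 1))) ^ 2 :=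
      mul_lt_mul_of_pos_left hsq2 hB
    linarith
  · have hdiv : Tendsto (fun T : ℝ => ω / T) atTop (nhds 0) :=
      tendsto_const_nhds.div_atTop tendsto_id
    have hndiv : Tendsto (fun T : ℝ => -ω / T) atTop (nhds 0) := by
      have := hdiv.neg
      simp only [neg_zero] at this
      refine this.congr fun T => by rw [neg_div]
    have he1 : Tendsto (fun T : ℝ => Real.exp (-ω / T)) atTop (nhds 1) := by
      have := (Real.continuous_exp.tendsto 0).comp hndiv
      simpa [Function.comp_def] using this
    have he2 : Tendsto (fun T : ℝ => Real.exp (ω / T)) atTop (nhds 1) := by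
      have := (Real.continuous_exp.tendsto 0).comp hdiv
      simpa [Function.comp_def] using this
    have huT : Tendsto u atTop (nhds (1/2)) := by
      have h := (tendsto_const_nhds : Tendsto (fun _ : ℝ => (1:ℝ)) atTop (nhds 1)).div
        (he1.add (tendsto_const_nhds : Tendsto (fun _ : ℝ => (1:ℝ)) atTop (nhds 1)))
        (by norm_num : (1:ℝ) + 1 ≠ 0)
      refine Tendsto.congr (fun T => (hu T).symm) ?_
      convert h using 2
      all_goals norm_num
    have hvT : Tendsto v atTop (nhds (1/2)) := by
      have h := (tendsto_const_nhds : Tendsto (fun _ : ℝ => (1:ℝ)) atTop (nhds 1)).div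
        (he2.add (tendsto_const_nhds : Tendsto (fun _ : ℝ => (1:ℝ)) atTop (nhds 1)))
        (by norm_num : (1:ℝ) + 1 ≠ 0)
      refine Tendsto.congr (fun T => (hv T).symm) ?_
      convert h using 2
      all_goals norm_num
    have hfT : Tendsto f atTop (nhds (4 * (α ^ 2 * (1 - α ^ 2) * (1/2 : ℝ) ^ 2 -
        1/2 * α ^ 4 * ((1/2 : ℝ) * (1/2)) ^ 2))) := by
      refine Tendsto.congr (fun T => (hf T).symm) ?_
      exact tendsto_const_nhds.mul ((tendsto_const_nhds.mul (huT.pow 2)).sub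
        (tendsto_const_nhds.mul ((huT.mul hvT).pow 2)))
    convert hfT using 2
    ring
end

section
/- Fix α ∈ (0,1) and ω > 0, and let g(T) = |a₁₈|² − (3/4)a₃₃a₈₈ − (1/4)(a₁₁+a₂₂+a₄₄)a₈₈, so that S^{BC→A}_H(T) = max{0, (16/3)g(T)}. Then g(T) = (α²(1−α²)/4)·(6u(T)² − 2u(T) − 1), and consequently g(T) > 0 if and only if T < T_c := ω / ln((2+√7)/3). Hence S^{BC→A}_H(T) > 0 for 0 < T < T_c and S^{BC→A}_H(T) = 0 for T ≥ T_c: the steering from Bob and Charlie to Alice suffers sudden death at the critical Hawking temperature T_c, which is independent of α. -/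
open Filter Topology

/-- the argument `g` of `S^{BC→A}_H = max {0, (16/3) g}` equals
`(α²(1-α²)/4)(6u² - 2u - 1)`; it is positive iff `T < T_c = ω / ln((2+√7)/3)`, so the
steering from Bob and Charlie to Alice suffers sudden death at `T_c`, independently of `α`. -/
theorem steering_BCtoA_sudden_death
    (α ω : ℝ) (hα0 : 0 < α) (hα1 : α < 1) (hω : 0 < ω)
    (u v g : ℝ → ℝ)
    (hu : ∀ T : ℝ, u T = 1 / (Real.exp (-ω / T) + 1))
    (hv : ∀ T : ℝ, v T = 1 / (Real.exp (ω / T) + 1))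
    (hg : ∀ T : ℝ, g T = (α * u T * Real.sqrt (1 - α ^ 2)) ^ 2
      - 3/4 * (α ^ 2 * u T * v T) * (1 - α ^ 2)
      - 1/4 * (α ^ 2 * (u T) ^ 2 + α ^ 2 * u T * v T + α ^ 2 * (v T) ^ 2) * (1 - α ^ 2))
    (Tc : ℝ) (hTc : Tc = ω / Real.log ((2 + Real.sqrt 7) / 3)) :
    (∀ T : ℝ, 0 < T → g T = α ^ 2 * (1 - α ^ 2) / 4 * (6 * (u T) ^ 2 - 2 * u T - 1)) ∧
    (∀ T : ℝ, 0 < T → (0 < g T ↔ T < Tc)) ∧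
    (∀ T : ℝ, 0 < T → T < Tc → 0 < max 0 (16/3 * g T)) ∧
    (∀ T : ℝ, 0 < T → Tc ≤ T → max 0 (16/3 * g T) = 0) := by
  have hα2 : 0 < 1 - α ^ 2 := by nlinarith
  have hs7 : Real.sqrt 7 ^ 2 = 7 := Real.sq_sqrt (by norm_num)
  have h2s7 : (2:ℝ) < Real.sqrt 7 := by
    nlinarith [Real.sqrt_nonneg 7]
  have hL : 0 < Real.log ((2 + Real.sqrt 7) / 3) := by
    apply Real.log_pos; nlinarith
  have hlog : Real.log (Real.sqrt 7 - 2) = - Real.log ((2 + Real.sqrt 7) / 3) := by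
    rw [← Real.log_inv]
    congr 1
    rw [inv_div, eq_div_iff (by nlinarith)]
    nlinarith
  -- u + v = 1 for T ≠ 0
  have huv : ∀ T : ℝ, 0 < T → v T = 1 - u T := by
    intro T hT
    have hE : (0:ℝ) < Real.exp (ω / T) := Real.exp_pos _
    have hE2 : (0:ℝ) < Real.exp (-ω / T) := Real.exp_pos _
    rw [hu, hv]
    rw [neg_div, Real.exp_neg]
    field_simp
    ring
  -- part 1
  have part1 : ∀ T : ℝ, 0 < T →
      g T = α ^ 2 * (1 - α ^ 2) / 4 * (6 * (u T) ^ 2 - 2 * u T - 1) := by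
    intro T hT
    have hs : Real.sqrt (1 - α ^ 2) ^ 2 = 1 - α ^ 2 := Real.sq_sqrt (le_of_lt hα2)
    rw [hg T, huv T hT]
    linear_combination (α ^ 2 * (u T) ^ 2) * hs
  -- part 2
  have part2 : ∀ T : ℝ, 0 < T → (0 < g T ↔ T < Tc) := by
    intro T hT
    set x := Real.exp (-ω / T) with hxdef
    have hx : 0 < x := Real.exp_pos _
    have hx1 : x + 1 ≠ 0 := by positivity
    have key : 6 * (u T) ^ 2 - 2 * u T - 1 = (3 - 4 * x - x ^ 2) / (x + 1) ^ 2 := by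
      rw [hu, ← hxdef]; field_simp; ring
    have hquad : 0 < 6 * (u T) ^ 2 - 2 * u T - 1 ↔ x < Real.sqrt 7 - 2 := by
      rw [key]
      rw [div_pos_iff]
      constructor
      · rintro (⟨h1, _⟩ | ⟨_, h2⟩)
        · nlinarith
        · nlinarith
      · intro h; left; constructor <;> nlinarith
    have hexp : x < Real.sqrt 7 - 2 ↔ T < Tc := by
      rw [hxdef, ← Real.lt_log_iff_exp_lt (by nlinarith), hlog, hTc,
        lt_div_iff₀ hL, neg_div]
      rw [neg_lt_neg_iff, lt_div_iff₀ hT]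
      constructor <;> intro h <;> nlinarith
    rw [part1 T hT]
    have hC : 0 < α ^ 2 * (1 - α ^ 2) / 4 := by positivity
    rw [mul_pos_iff]
    constructor
    · rintro (⟨_, h⟩ | ⟨h, _⟩)
      · exact hexp.mp (hquad.mp h)
      · linarith
    · intro h; left; exact ⟨hC, hquad.mpr (hexp.mpr h)⟩
  refine ⟨part1, part2, ?_, ?_⟩
  · intro T hT hTc'
    have := (part2 T hT).mpr hTc'
    have : 0 < 16/3 * g T := by linarith
    exact lt_max_of_lt_right this
  · intro T hT hTc'
    have hng : ¬ (0 < g T) := by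
      intro h; exact absurd ((part2 T hT).mp h) (not_lt.mpr hTc')
    have : 16/3 * g T ≤ 0 := by push_neg at hng; linarith
    exact max_eq_left this
end

section
/- For all α ∈ (0,1), ω > 0 and T > 0, the state ρ^H_{ABC}(T) satisfies 4|a₁₈|² ≥ (16/3)·(|a₁₈|² − (a₁₁+a₃₃)((1/4)a₂₂+(3/4)a₄₄+(1/4)a₈₈)) and 4|a₁₈|² ≥ (16/3)·(|a₁₈|² − (a₃₃+a₄₄+a₈₈)((1/4)a₁₁+(3/4)a₂₂)). Consequently S^{C→AB}_H ≥ S^{AB→C}_H and S^{B→CA}_H ≥ S^{CA→B}_H: the 1→2 steering always exceeds the corresponding 2→1 steering in the scenario of three physically accessible modes. -/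
open Filter Topology

set_option maxHeartbeats 1000000 in
/-- for `ρ^H_{ABC}` the `1→2` steering always dominates the `2→1` steering:
`S^{C→AB}_H ≥ S^{AB→C}_H` and `S^{B→CA}_H ≥ S^{CA→B}_H`. -/
theorem oneToTwo_dominates_twoToOne_ABC
    (α ω T u v : ℝ) (hα0 : 0 < α) (hα1 : α < 1) (hω : 0 < ω) (hT : 0 < T)
    (hu : u = 1 / (Real.exp (-ω / T) + 1)) (hv : v = 1 / (Real.exp (ω / T) + 1))
    (a11 a22 a33 a44 a88 a18 : ℝ)
    (h11 : a11 = α ^ 2 * u ^ 2) (h22 : a22 = α ^ 2 * u * v) (h33 : a33 = α ^ 2 * u * v)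
    (h44 : a44 = α ^ 2 * v ^ 2) (h88 : a88 = 1 - α ^ 2)
    (h18 : a18 = α * u * Real.sqrt (1 - α ^ 2)) :
    16/3 * (a18 ^ 2 - (a11 + a33) * (1/4 * a22 + 3/4 * a44 + 1/4 * a88)) ≤ 4 * a18 ^ 2 ∧
    16/3 * (a18 ^ 2 - (a33 + a44 + a88) * (1/4 * a11 + 3/4 * a22)) ≤ 4 * a18 ^ 2 ∧
    max 0 (16/3 * (a18 ^ 2 - (a11 + a33) * (1/4 * a22 + 3/4 * a44 + 1/4 * a88)))
      ≤ max 0 (4 * a18 ^ 2) ∧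
    max 0 (16/3 * (a18 ^ 2 - (a33 + a44 + a88) * (1/4 * a11 + 3/4 * a22)))
      ≤ max 0 (4 * a18 ^ 2) := by
  have hs2 : Real.sqrt (1 - α ^ 2) ^ 2 = 1 - α ^ 2 := by
    rw [Real.sq_sqrt]; nlinarith
  have hE1 : 0 < Real.exp (-ω / T) := Real.exp_pos _
  have hE2 : 0 < Real.exp (ω / T) := Real.exp_pos _
  have hmul : Real.exp (-ω / T) * Real.exp (ω / T) = 1 := by
    rw [← Real.exp_add]; ring_nf; exact Real.exp_zero
  have hu0 : 0 < u := by rw [hu]; positivity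
  have hv0 : 0 < v := by rw [hv]; positivity
  have huv : u + v = 1 := by
    rw [hu, hv]
    field_simp
    rw [neg_div] at hmul
    nlinarith [hmul]
  have hu1 : u < 1 := by linarith
  have hp : 0 < 1 - α ^ 2 := by nlinarith
  have ha18 : a18 ^ 2 = α ^ 2 * u ^ 2 * (1 - α ^ 2) := by
    rw [h18, mul_pow, mul_pow, hs2]
  have hv' : v = 1 - u := by linarith
  have h1 : 16/3 * (a18 ^ 2 - (a11 + a33) * (1/4 * a22 + 3/4 * a44 + 1/4 * a88)) ≤ 4 * a18 ^ 2 := by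
    rw [ha18, h11, h22, h33, h44, h88, hv']
    nlinarith [mul_nonneg (mul_nonneg (mul_nonneg (sq_nonneg α) hu0.le) (by linarith : (0:ℝ) ≤ 1 - u))
      (show (0:ℝ) ≤ α ^ 2 * u + 3 * (α ^ 2 * (1 - u)) + (1 - α ^ 2) by nlinarith)]
  have h2 : 16/3 * (a18 ^ 2 - (a33 + a44 + a88) * (1/4 * a11 + 3/4 * a22)) ≤ 4 * a18 ^ 2 := by
    rw [ha18, h11, h22, h33, h44, h88]
    nlinarith [sq_nonneg α, mul_pos hu0 hv0, sq_nonneg (α * u),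
      mul_nonneg (mul_nonneg hu0.le hv0.le) (sq_nonneg α),
      mul_nonneg (mul_nonneg (mul_nonneg hu0.le hu0.le) hv0.le) (sq_nonneg α),
      mul_nonneg (mul_nonneg (mul_nonneg hu0.le hu0.le) hv0.le) (mul_nonneg (sq_nonneg α) (sq_nonneg α)),
      mul_nonneg (sq_nonneg u) (mul_nonneg (sq_nonneg α) (by nlinarith : (0:ℝ) ≤ 1 - α ^ 2))]
  have hnn : (0:ℝ) ≤ 4 * a18 ^ 2 := by positivity
  refine ⟨h1, h2, ?_, ?_⟩ <;>
    exact max_le (le_max_of_le_left le_rfl) (le_trans (by assumption) (le_max_right _ _))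
end

section
/- For all α ∈ (0,1), ω > 0 and T > 0, the state ρ^H_{ABc}(T) satisfies |b₂₇|² ≤ (3/4)b₄₄b₇₇ + (1/4)(b₁₁+b₂₂+b₃₃)b₇₇ and |b₂₇|² ≤ (b₃₃+b₄₄+b₇₇)((3/4)b₁₁+(1/4)b₂₂). Consequently S^{Bc→A}_H(T) = 0 and S^{cA→B}_H(T) = 0 identically: in the scenario of two physically accessible modes, the 2→1 steerings toward Alice and toward Bob vanish for all Hawking temperatures, so any nonzero 1→2 steering is one-way. -/
open Filter Topology

/-- for `ρ^H_{ABc}` the `2→1` steerings toward Alice and toward Bob vanish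
for all Hawking temperatures: `S^{Bc→A}_H = 0` and `S^{cA→B}_H = 0`. -/
theorem twoToOne_steering_vanishes_ABc
    (α ω T u v : ℝ) (hα0 : 0 < α) (hα1 : α < 1) (hω : 0 < ω) (hT : 0 < T)
    (hu : u = 1 / (Real.exp (-ω / T) + 1)) (hv : v = 1 / (Real.exp (ω / T) + 1))
    (b11 b22 b33 b44 b77 b27 : ℝ)
    (h11 : b11 = α ^ 2 * u ^ 2) (h22 : b22 = α ^ 2 * u * v) (h33 : b33 = α ^ 2 * u * v)
    (h44 : b44 = α ^ 2 * v ^ 2) (h77 : b77 = 1 - α ^ 2)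
    (h27 : b27 = α * Real.sqrt (u * v) * Real.sqrt (1 - α ^ 2)) :
    b27 ^ 2 ≤ 3/4 * b44 * b77 + 1/4 * (b11 + b22 + b33) * b77 ∧
    b27 ^ 2 ≤ (b33 + b44 + b77) * (3/4 * b11 + 1/4 * b22) ∧
    max 0 (16/3 * (b27 ^ 2 - 3/4 * b44 * b77 - 1/4 * (b11 + b22 + b33) * b77)) = 0 ∧
    max 0 (16/3 * (b27 ^ 2 - (b33 + b44 + b77) * (3/4 * b11 + 1/4 * b22))) = 0 := by
  have hu0 : 0 < u := by
    rw [hu]; positivity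
  have hv0 : 0 < v := by
    rw [hv]; positivity
  have hvu : v ≤ u := by
    rw [hu, hv]
    have : Real.exp (-ω / T) ≤ Real.exp (ω / T) := by
      apply Real.exp_le_exp.2
      have h0 : 0 < ω / T := div_pos hω hT
      rw [neg_div]; linarith
    have h1 : 0 < Real.exp (-ω / T) + 1 := by positivity
    have h2 : 0 < Real.exp (ω / T) + 1 := by positivity
    rw [div_le_div_iff₀ h2 h1]
    nlinarith
  have hα2 : (0:ℝ) ≤ 1 - α ^ 2 := by nlinarith
  have huv : (0:ℝ) ≤ u * v := by positivity
  have hb27 : b27 ^ 2 = α ^ 2 * (u * v) * (1 - α ^ 2) := by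
    rw [h27]
    rw [mul_pow, mul_pow, Real.sq_sqrt huv, Real.sq_sqrt hα2]
  have h1 : b27 ^ 2 ≤ 3/4 * b44 * b77 + 1/4 * (b11 + b22 + b33) * b77 := by
    rw [hb27, h11, h22, h33, h44, h77]
    nlinarith [mul_nonneg (mul_nonneg (sq_nonneg α) hα2) (sq_nonneg (u - v))]
  have h2 : b27 ^ 2 ≤ (b33 + b44 + b77) * (3/4 * b11 + 1/4 * b22) := by
    rw [hb27, h11, h22, h33, h44, h77]
    nlinarith [mul_nonneg (mul_nonneg hα2 (sq_nonneg α)) (mul_nonneg hu0.le (sub_nonneg.2 hvu)),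
      mul_nonneg (mul_nonneg (sq_nonneg α) (add_nonneg huv (mul_nonneg hv0.le hv0.le)))
        (mul_nonneg (sq_nonneg α) (add_nonneg (mul_nonneg hu0.le hu0.le) huv))]
  refine ⟨h1, h2, ?_, ?_⟩
  · rw [max_eq_left]; linarith
  · rw [max_eq_left]; linarith
end

section
/- For fixed α ∈ (0,1) and ω > 0, the function S^{c→AB}_H(T) = 4α²(1−α²)·u(T)v(T) = 4α²(1−α²)/(e^{−ω/T}+e^{ω/T}+2) is strictly increasing in T on (0,∞), with lim_{T→0⁺} S^{c→AB}_H(T) = 0 and lim_{T→∞} S^{c→AB}_H(T) = α²(1−α²): the Hawking effect enhances the steering from anti-Charlie to Alice and Bob. -/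
open Filter Topology

/-- `S^{c→AB}_H(T) = 4α²(1-α²)u(T)v(T) = 4α²(1-α²)/(e^{-ω/T}+e^{ω/T}+2)`
is strictly increasing in `T`, tends to `0` as `T → 0⁺` and to `α²(1-α²)` as `T → ∞`:
the Hawking effect enhances the steering from anti-Charlie to Alice and Bob. -/
theorem steering_ctoAB_increasing
    (α ω : ℝ) (hα0 : 0 < α) (hα1 : α < 1) (hω : 0 < ω)
    (S : ℝ → ℝ)
    (hS : ∀ T : ℝ, S T = 4 * α ^ 2 * (1 - α ^ 2) *
      (1 / (Real.exp (-ω / T) + 1)) * (1 / (Real.exp (ω / T) + 1))) :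
    (∀ T : ℝ, S T = 4 * α ^ 2 * (1 - α ^ 2) / (Real.exp (-ω / T) + Real.exp (ω / T) + 2)) ∧
    StrictMonoOn S (Set.Ioi 0) ∧
    Tendsto S (nhdsWithin 0 (Set.Ioi 0)) (nhds 0) ∧
    Tendsto S atTop (nhds (α ^ 2 * (1 - α ^ 2))) := by
  have hC : 0 < 4 * α ^ 2 * (1 - α ^ 2) := by
    have h1 : 0 < α ^ 2 := by positivity
    have h2 : 0 < 1 - α ^ 2 := by nlinarith
    nlinarith [mul_pos h1 h2]
  have hDpos : ∀ T : ℝ, 0 < Real.exp (-ω / T) + Real.exp (ω / T) + 2 := by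
    intro T
    have := Real.exp_pos (-ω / T)
    have := Real.exp_pos (ω / T)
    linarith
  have key : ∀ T : ℝ, S T = 4 * α ^ 2 * (1 - α ^ 2) /
      (Real.exp (-ω / T) + Real.exp (ω / T) + 2) := by
    intro T
    have hmul : Real.exp (-ω / T) * Real.exp (ω / T) = 1 := by
      rw [← Real.exp_add, show -ω / T + ω / T = 0 by ring, Real.exp_zero]
    have hp : (Real.exp (-ω / T) + 1) ≠ 0 := by positivity
    have hq : (Real.exp (ω / T) + 1) ≠ 0 := by positivity
    have hpq : (Real.exp (-ω / T) + 1) * (Real.exp (ω / T) + 1)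
        = Real.exp (-ω / T) + Real.exp (ω / T) + 2 := by linear_combination hmul
    rw [hS T, mul_one_div, mul_one_div, div_div, hpq]
  -- strict monotonicity of the denominator argument
  have denom_mono : ∀ x y : ℝ, 0 < y → y < x →
      Real.exp (-y) + Real.exp y < Real.exp (-x) + Real.exp x := by
    intro x y hy hyx
    have h1 : Real.exp (-x) * Real.exp x = 1 := by
      rw [← Real.exp_add, show -x + x = 0 by ring, Real.exp_zero]
    have h2 : Real.exp (-y) * Real.exp y = 1 := by
      rw [← Real.exp_add, show -y + y = 0 by ring, Real.exp_zero]
    have h3 : Real.exp y < Real.exp x := Real.exp_lt_exp.mpr hyx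
    have h4 : (1 : ℝ) < Real.exp x * Real.exp y := by
      rw [← Real.exp_add]
      have hpos : (0 : ℝ) < x + y := by linarith
      have := Real.add_one_le_exp (x + y)
      linarith
    nlinarith [Real.exp_pos x, Real.exp_pos y, Real.exp_pos (-x), Real.exp_pos (-y)]
  have hmono : StrictMonoOn S (Set.Ioi 0) := by
    intro a ha b hb hab
    rw [key a, key b]
    have ha' : (0 : ℝ) < a := ha
    have hb' : (0 : ℝ) < b := hb
    have hx : 0 < ω / b := by positivity
    have hxy : ω / b < ω / a := by
      apply div_lt_div_of_pos_left hω ha' hab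
    have hlt : Real.exp (-ω / b) + Real.exp (ω / b) + 2 <
        Real.exp (-ω / a) + Real.exp (ω / a) + 2 := by
      have := denom_mono (ω / a) (ω / b) hx hxy
      simpa [neg_div] using this
    exact div_lt_div_of_pos_left hC (hDpos b) hlt
  -- limit as T → 0⁺
  have hx0 : Tendsto (fun T : ℝ => ω / T) (𝓝[>] 0) atTop := by
    simpa [div_eq_mul_inv] using (tendsto_inv_nhdsGT_zero).const_mul_atTop hω
  have hDtop : Tendsto (fun T : ℝ => Real.exp (-ω / T) + Real.exp (ω / T) + 2)
      (𝓝[>] 0) atTop := by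
    have hexp : Tendsto (fun T : ℝ => Real.exp (ω / T)) (𝓝[>] 0) atTop :=
      Real.tendsto_exp_atTop.comp hx0
    apply tendsto_atTop_mono _ (tendsto_atTop_add_const_right _ 2 hexp)
    intro T
    have := Real.exp_pos (-ω / T)
    linarith
  have hlim0 : Tendsto S (𝓝[>] 0) (𝓝 0) := by
    have : Tendsto (fun T : ℝ => 4 * α ^ 2 * (1 - α ^ 2) /
        (Real.exp (-ω / T) + Real.exp (ω / T) + 2)) (𝓝[>] 0) (𝓝 0) :=
      Tendsto.div_atTop tendsto_const_nhds hDtop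
    exact this.congr fun T => (key T).symm
  -- limit as T → ∞
  have hxT : Tendsto (fun T : ℝ => ω / T) atTop (𝓝 0) := by
    have := tendsto_inv_atTop_zero (𝕜 := ℝ)
    have h := this.const_mul ω
    simpa [div_eq_mul_inv] using h
  have hxT' : Tendsto (fun T : ℝ => -ω / T) atTop (𝓝 0) := by
    have h := hxT.neg
    simpa [neg_div] using h
  have hDlim : Tendsto (fun T : ℝ => Real.exp (-ω / T) + Real.exp (ω / T) + 2)
      atTop (𝓝 4) := by
    have h1 : Tendsto (fun T : ℝ => Real.exp (-ω / T)) atTop (𝓝 1) := by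
      have := (Real.continuous_exp.tendsto 0).comp hxT'
      simpa [Function.comp_def] using this
    have h2 : Tendsto (fun T : ℝ => Real.exp (ω / T)) atTop (𝓝 1) := by
      have := (Real.continuous_exp.tendsto 0).comp hxT
      simpa [Function.comp_def] using this
    have h3 := (h1.add h2).add_const 2
    norm_num at h3
    exact h3
  have hlimtop : Tendsto S atTop (𝓝 (α ^ 2 * (1 - α ^ 2))) := by
    have : Tendsto (fun T : ℝ => 4 * α ^ 2 * (1 - α ^ 2) /
        (Real.exp (-ω / T) + Real.exp (ω / T) + 2)) atTop
        (𝓝 (4 * α ^ 2 * (1 - α ^ 2) / 4)) :=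
      tendsto_const_nhds.div hDlim (by norm_num)
    have heq : 4 * α ^ 2 * (1 - α ^ 2) / 4 = α ^ 2 * (1 - α ^ 2) := by ring
    rw [heq] at this
    exact this.congr fun T => (key T).symm
  exact ⟨key, hmono, hlim0, hlimtop⟩
end

section
/- Fix α ∈ (0,1) and ω > 0. (i) The function S^{c→Ab}_H(T) = 4α²(1−α²)·v(T)² = 4α²(1−α²)/(e^{ω/T}+1)² is strictly increasing in T on (0,∞), with lim_{T→0⁺} S^{c→Ab}_H(T) = 0 and lim_{T→∞} S^{c→Ab}_H(T) = α²(1−α²). (ii) There exists T₀ > 0 such that for all T ∈ (0,T₀), |c₄₅|² < (c₂₂+c₄₄)·((3/4)c₁₁+(1/4)c₃₃+(1/4)c₅₅), hence S^{Ab→c}_H(T) = 0 while S^{c→Ab}_H(T) > 0: at low Hawking temperatures the steering between Alice plus anti-Bob and anti-Charlie is one-way. -/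
open Filter Topology

/-- (i) `S^{c→Ab}_H(T) = 4α²(1-α²)v(T)²` is strictly increasing with limits
`0` at `T → 0⁺` and `α²(1-α²)` at `T → ∞`; (ii) at low Hawking temperatures `S^{Ab→c}_H = 0`
while `S^{c→Ab}_H > 0`, i.e. the steering is one-way. -/
theorem steering_ctoAb_increasing_and_oneway
    (α ω : ℝ) (hα0 : 0 < α) (hα1 : α < 1) (hω : 0 < ω)
    (u v : ℝ → ℝ)
    (hu : ∀ T : ℝ, u T = 1 / (Real.exp (-ω / T) + 1))
    (hv : ∀ T : ℝ, v T = 1 / (Real.exp (ω / T) + 1)) :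
    StrictMonoOn (fun T : ℝ => 4 * α ^ 2 * (1 - α ^ 2) * (v T) ^ 2) (Set.Ioi 0) ∧
    Tendsto (fun T : ℝ => 4 * α ^ 2 * (1 - α ^ 2) * (v T) ^ 2)
      (nhdsWithin 0 (Set.Ioi 0)) (nhds 0) ∧
    Tendsto (fun T : ℝ => 4 * α ^ 2 * (1 - α ^ 2) * (v T) ^ 2) atTop
      (nhds (α ^ 2 * (1 - α ^ 2))) ∧
    ∃ T₀ > 0, ∀ T : ℝ, 0 < T → T < T₀ →
      (α * v T * Real.sqrt (1 - α ^ 2)) ^ 2 <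
        (α ^ 2 * u T * v T + α ^ 2 * (v T) ^ 2) *
          (3/4 * (α ^ 2 * (u T) ^ 2) + 1/4 * (α ^ 2 * u T * v T) + 1/4 * (1 - α ^ 2)) ∧
      max 0 (16/3 * ((α * v T * Real.sqrt (1 - α ^ 2)) ^ 2 -
        (α ^ 2 * u T * v T + α ^ 2 * (v T) ^ 2) *
          (3/4 * (α ^ 2 * (u T) ^ 2) + 1/4 * (α ^ 2 * u T * v T) + 1/4 * (1 - α ^ 2)))) = 0 ∧
      0 < max 0 (4 * (α * v T * Real.sqrt (1 - α ^ 2)) ^ 2) := by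
  have hα2 : 0 < 1 - α ^ 2 := by nlinarith
  have hc : 0 < 4 * α ^ 2 * (1 - α ^ 2) := by positivity
  have hs : Real.sqrt (1 - α ^ 2) ^ 2 = 1 - α ^ 2 := Real.sq_sqrt hα2.le
  refine ⟨?_, ?_, ?_, ?_⟩
  · intro a ha b hb hab
    simp only [Set.mem_Ioi] at ha hb
    have h1 : Real.exp (ω / b) < Real.exp (ω / a) := by
      apply Real.exp_lt_exp.mpr
      exact div_lt_div_of_pos_left hω ha hab
    have hpa : 0 < Real.exp (ω / a) + 1 := by positivity
    have hpb : 0 < Real.exp (ω / b) + 1 := by positivity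
    have hvv : 1 / (Real.exp (ω / a) + 1) < 1 / (Real.exp (ω / b) + 1) :=
      one_div_lt_one_div_of_lt hpb (by linarith)
    have hva : 0 < 1 / (Real.exp (ω / a) + 1) := by positivity
    simp only [hv]
    nlinarith [mul_lt_mul'' hvv hvv hva.le hva.le, hc]
  · have h1 : Tendsto (fun T : ℝ => ω / T) (nhdsWithin 0 (Set.Ioi 0)) atTop := by
      simpa [div_eq_mul_inv] using tendsto_inv_nhdsGT_zero.const_mul_atTop hω
    have h2 : Tendsto (fun T : ℝ => Real.exp (ω / T) + 1)
        (nhdsWithin 0 (Set.Ioi 0)) atTop :=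
      tendsto_atTop_add_const_right _ 1 (Real.tendsto_exp_atTop.comp h1)
    have h3 : Tendsto (fun T : ℝ => 1 / (Real.exp (ω / T) + 1))
        (nhdsWithin 0 (Set.Ioi 0)) (nhds 0) := by
      simpa [one_div, Pi.inv_def] using h2.inv_tendsto_atTop
    have h4 := (h3.pow 2).const_mul (4 * α ^ 2 * (1 - α ^ 2))
    have hfun : (fun T : ℝ => 4 * α ^ 2 * (1 - α ^ 2) * (v T) ^ 2) =
        fun T : ℝ => 4 * α ^ 2 * (1 - α ^ 2) * (1 / (Real.exp (ω / T) + 1)) ^ 2 := by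
      funext T; rw [hv]
    rw [hfun]
    simpa using h4
  · have h1 : Tendsto (fun T : ℝ => ω / T) atTop (nhds 0) :=
      tendsto_const_nhds.div_atTop tendsto_id
    have h2 : Tendsto (fun T : ℝ => Real.exp (ω / T)) atTop (nhds 1) := by
      have := (Real.continuous_exp.tendsto 0).comp h1
      simpa [Function.comp_def] using this
    have h3 : Tendsto (fun T : ℝ => Real.exp (ω / T) + 1) atTop (nhds 2) := by
      have := h2.add (tendsto_const_nhds (x := (1 : ℝ)))
      norm_num at this
      exact this
    have h4 : Tendsto (fun T : ℝ => 1 / (Real.exp (ω / T) + 1)) atTop (nhds (1 / 2)) :=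
      tendsto_const_nhds.div h3 two_ne_zero
    have h5 := (h4.pow 2).const_mul (4 * α ^ 2 * (1 - α ^ 2))
    have hfun : (fun T : ℝ => 4 * α ^ 2 * (1 - α ^ 2) * (v T) ^ 2) =
        fun T : ℝ => 4 * α ^ 2 * (1 - α ^ 2) * (1 / (Real.exp (ω / T) + 1)) ^ 2 := by
      funext T; rw [hv]
    rw [hfun]
    have : α ^ 2 * (1 - α ^ 2) = 4 * α ^ 2 * (1 - α ^ 2) * (1 / 2) ^ 2 := by ring
    rw [this]
    exact h5
  · have hlog3 : 0 < Real.log 3 := Real.log_pos (by norm_num)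
    refine ⟨ω / Real.log 3, div_pos hω hlog3, ?_⟩
    intro T hT hT0
    have hE : Real.log 3 < ω / T := by
      rw [lt_div_iff₀ hT]
      calc Real.log 3 * T = T * Real.log 3 := by ring
        _ < ω / Real.log 3 * Real.log 3 := by
            exact mul_lt_mul_of_pos_right hT0 hlog3
        _ = ω := div_mul_cancel₀ ω hlog3.ne'
    have hE3 : (3 : ℝ) < Real.exp (ω / T) := by
      calc (3 : ℝ) = Real.exp (Real.log 3) := (Real.exp_log (by norm_num)).symm
        _ < Real.exp (ω / T) := Real.exp_lt_exp.mpr hE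
    set E := Real.exp (ω / T) with hEdef
    have hEpos : 0 < E := Real.exp_pos _
    have hE1 : 0 < E + 1 := by linarith
    have hvT : v T = 1 / (E + 1) := hv T
    have hw : 0 < v T := by rw [hvT]; positivity
    have hwlt : v T < 1 / 4 := by
      rw [hvT]
      exact one_div_lt_one_div_of_lt (by norm_num) (by linarith)
    have huv : u T + v T = 1 := by
      rw [hu, hvT, neg_div, Real.exp_neg, ← hEdef]
      field_simp
      ring
    have hu0 : 0 < u T := by
      rw [hu]; positivity
    have key : (1 - α ^ 2) * v T <
        3/4 * (α ^ 2 * (u T) ^ 2) + 1/4 * (α ^ 2 * u T * v T) + 1/4 * (1 - α ^ 2) := by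
      nlinarith [sq_nonneg (u T), mul_pos hu0 hw, mul_pos hα2 hw]
    have h1 : (α * v T * Real.sqrt (1 - α ^ 2)) ^ 2 <
        (α ^ 2 * u T * v T + α ^ 2 * (v T) ^ 2) *
          (3/4 * (α ^ 2 * (u T) ^ 2) + 1/4 * (α ^ 2 * u T * v T) + 1/4 * (1 - α ^ 2)) := by
      have hpos : 0 < α ^ 2 * v T := by positivity
      have h := mul_lt_mul_of_pos_left key hpos
      calc (α * v T * Real.sqrt (1 - α ^ 2)) ^ 2
          = α ^ 2 * v T * ((1 - α ^ 2) * v T) := by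
            rw [mul_pow, mul_pow, hs]; ring
        _ < α ^ 2 * v T *
            (3/4 * (α ^ 2 * (u T) ^ 2) + 1/4 * (α ^ 2 * u T * v T) + 1/4 * (1 - α ^ 2)) := h
        _ = (α ^ 2 * u T * v T + α ^ 2 * (v T) ^ 2) *
            (3/4 * (α ^ 2 * (u T) ^ 2) + 1/4 * (α ^ 2 * u T * v T) + 1/4 * (1 - α ^ 2)) := by
            rw [show α ^ 2 * u T * v T + α ^ 2 * (v T) ^ 2 = α ^ 2 * v T * (u T + v T) by ring,
              huv]; ring
    refine ⟨h1, max_eq_left (by nlinarith [h1]), ?_⟩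
    have hs0 : 0 < Real.sqrt (1 - α ^ 2) := Real.sqrt_pos.mpr hα2
    have : 0 < 4 * (α * v T * Real.sqrt (1 - α ^ 2)) ^ 2 := by positivity
    exact lt_max_of_lt_right this
end
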